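/- arXiv:math/0406365 — 4 statements merged into one kernel-verified Lean document; each statement's English description precedes it below -/
import Mathlib

section
/- The multiplicator M of the cover L* of a finite-dimensional nilpotent Lie algebra L is contained both in the center of L* and in the derived subalgebra ⁅L*, L*⁆ of L*. -/
/-- The canonical projection `L → L ⧸ I` as a morphism of Lie algebras. -/
def LieIdeal.quotientMk {R : Type*} {L : Type*} [CommRing R] [LieRing L] [LieAlgebra R L]
    (I : LieIdeal R L) : L →ₗ⁅R⁆ L ⧸ I :=
  { I.toSubmodule.mkQ with
    map_lie' := fun {x y} => (LieSubmodule.Quotient.mk_bracket I x y) }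

/-- The cover `L* = F_d ⧸ ⁅I, F_d⁆` of a nilpotent Lie algebra `L ≅ F_d ⧸ I`,
where `F_d` is the free Lie algebra on `d` generators. -/
abbrev LieCover (F : Type u) [Field F] (d : ℕ)
    (I : LieIdeal F (FreeLieAlgebra F (Fin d))) :=
  FreeLieAlgebra F (Fin d) ⧸ ⁅I, (⊤ : LieIdeal F (FreeLieAlgebra F (Fin d)))⁆

/-- The multiplicator `M = I ⧸ ⁅I, F_d⁆`, an ideal of the cover `L*`. -/
noncomputable abbrev lieMultiplicator (F : Type u) [Field F] (d : ℕ)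
    (I : LieIdeal F (FreeLieAlgebra F (Fin d))) : LieIdeal F (LieCover F d I) :=
  LieIdeal.map (LieIdeal.quotientMk ⁅I, (⊤ : LieIdeal F (FreeLieAlgebra F (Fin d)))⁆) I

lemma LieIdeal.quotientMk_surjective {R : Type*} {L : Type*} [CommRing R] [LieRing L]
    [LieAlgebra R L] (I : LieIdeal R L) : Function.Surjective (LieIdeal.quotientMk I) :=
  Submodule.mkQ_surjective _

/-- Any Lie subalgebra of a free Lie algebra containing the generators is everything. -/
lemma lieSubalgebra_eq_top_of_range_of_le {F : Type u} [Field F] {X : Type*}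
    (K : LieSubalgebra F (FreeLieAlgebra F X)) (h : Set.range (FreeLieAlgebra.of F (X := X)) ⊆ K) :
    K = ⊤ := by
  rw [eq_top_iff]
  intro x _
  have key : K.incl.comp (FreeLieAlgebra.lift F (fun i => (⟨FreeLieAlgebra.of F i,
      h ⟨i, rfl⟩⟩ : K))) = LieHom.id := by
    apply FreeLieAlgebra.hom_ext
    intro i
    simp [FreeLieAlgebra.lift_of_apply]
  have hx : K.incl ((FreeLieAlgebra.lift F (fun i => (⟨FreeLieAlgebra.of F i,
      h ⟨i, rfl⟩⟩ : K))) x) = x := by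
    have h2 := LieHom.congr_fun key x
    simpa using h2
  rw [← hx]
  exact ((FreeLieAlgebra.lift F (fun i => (⟨FreeLieAlgebra.of F i, h ⟨i, rfl⟩⟩ : K))) x).2

lemma derivedSeries_one_eq_top_lie_top (F : Type*) (L : Type*) [Field F] [LieRing L]
    [LieAlgebra F L] :
    LieAlgebra.derivedSeries F L 1 = ⁅(⊤ : LieIdeal F L), (⊤ : LieIdeal F L)⁆ := by
  rw [LieAlgebra.derivedSeries_def, LieAlgebra.derivedSeriesOfIdeal_succ,
    LieAlgebra.derivedSeriesOfIdeal_zero]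

/-- The key algebraic fact: `I` is contained in the derived ideal of the free Lie algebra. -/
lemma lieIdeal_le_derived_of_equiv
    (F : Type u) [Field F] (L : Type v) [LieRing L] [LieAlgebra F L]
    [FiniteDimensional F L]
    (d : ℕ) (hd : d = Module.finrank F (L ⧸ LieAlgebra.derivedSeries F L 1))
    (I : LieIdeal F (FreeLieAlgebra F (Fin d)))
    (e : (FreeLieAlgebra F (Fin d) ⧸ I) ≃ₗ⁅F⁆ L) :
    I ≤ ⁅(⊤ : LieIdeal F (FreeLieAlgebra F (Fin d))),
        (⊤ : LieIdeal F (FreeLieAlgebra F (Fin d)))⁆ := by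
  set Fd := FreeLieAlgebra F (Fin d)
  set D : LieIdeal F Fd := ⁅(⊤ : LieIdeal F Fd), (⊤ : LieIdeal F Fd)⁆ with hD
  set DS : LieIdeal F L := LieAlgebra.derivedSeries F L 1 with hDS
  -- the composite F_d → L → L ⧸ DS
  set p : Fd →ₗ⁅F⁆ L := e.toLieHom.comp (LieIdeal.quotientMk I) with hp
  set g : Fd →ₗ⁅F⁆ L ⧸ DS := (LieIdeal.quotientMk DS).comp p with hg
  have hgsurj : Function.Surjective g :=
    (LieIdeal.quotientMk_surjective DS).comp
      (e.surjective.comp (LieIdeal.quotientMk_surjective I))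
  -- g kills brackets
  have hbrk : ∀ a b : Fd, g ⁅a, b⁆ = 0 := by
    intro a b
    have hmem : p ⁅a, b⁆ ∈ DS := by
      rw [p.map_lie, hDS, derivedSeries_one_eq_top_lie_top]
      exact LieSubmodule.lie_mem_lie (LieSubmodule.mem_top _) (LieSubmodule.mem_top _)
    show (LieIdeal.quotientMk DS) (p ⁅a, b⁆) = 0
    exact (LieSubmodule.Quotient.mk_eq_zero').mpr hmem
  -- hence D is in the kernel of g
  have hDker : ∀ x ∈ D, g x = 0 := by
    intro x hx
    have hle : D ≤ g.ker := by
      rw [hD, LieSubmodule.lieIdeal_oper_eq_span, LieSubmodule.lieSpan_le]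
      rintro m ⟨⟨a, -⟩, ⟨b, -⟩, rfl⟩
      exact LieHom.mem_ker.mpr (hbrk a b)
    exact LieHom.mem_ker.mp (hle hx)
  -- the induced map on the abelianization of Fd
  set ψ : (Fd ⧸ D.toSubmodule) →ₗ[F] (L ⧸ DS) :=
    D.toSubmodule.liftQ g.toLinearMap (fun x hx => LinearMap.mem_ker.mpr (hDker x hx)) with hψ
  have hψmk : ∀ x : Fd, ψ (Submodule.Quotient.mk x) = g x := fun x => rfl
  have hψsurj : Function.Surjective ψ := by
    intro y
    obtain ⟨x, rfl⟩ := hgsurj y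
    exact ⟨Submodule.Quotient.mk x, hψmk x⟩
  -- the images of the generators span the abelianization
  set f : Fin d → (Fd ⧸ D.toSubmodule) :=
    fun i => Submodule.Quotient.mk (FreeLieAlgebra.of F i) with hf
  set S : Submodule F (Fd ⧸ D.toSubmodule) := Submodule.span F (Set.range f) with hS
  have hStop : S = ⊤ := by
    let K : LieSubalgebra F Fd :=
      { Submodule.comap D.toSubmodule.mkQ S with
        lie_mem' := fun {a b} _ _ => by
          have hab : ⁅a, b⁆ ∈ D := by
            rw [hD]
            exact LieSubmodule.lie_mem_lie (LieSubmodule.mem_top _) (LieSubmodule.mem_top _)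
          have h0 : D.toSubmodule.mkQ ⁅a, b⁆ = 0 := by
            rw [Submodule.mkQ_apply, Submodule.Quotient.mk_eq_zero]
            exact hab
          show D.toSubmodule.mkQ ⁅a, b⁆ ∈ S
          rw [h0]
          exact S.zero_mem }
    have hK : K = ⊤ := by
      apply lieSubalgebra_eq_top_of_range_of_le
      rintro - ⟨i, rfl⟩
      show D.toSubmodule.mkQ (FreeLieAlgebra.of F i) ∈ S
      exact Submodule.subset_span ⟨i, rfl⟩
    rw [eq_top_iff]
    rintro v -
    obtain ⟨x, rfl⟩ := D.toSubmodule.mkQ_surjective v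
    have hxK : x ∈ K := hK.symm ▸ LieSubalgebra.mem_top x
    exact hxK
  -- finite-dimensionality and dimension bound for the abelianization
  classical
  haveI hfin : Module.Finite F (Fd ⧸ D.toSubmodule) :=
    Module.finite_def.mpr ⟨Finset.univ.image f, by
      rw [Finset.coe_image, Finset.coe_univ, Set.image_univ]; exact hStop⟩
  have hcard : Module.finrank F (Fd ⧸ D.toSubmodule) ≤ d := by
    classical
    have h1 : Module.finrank F (⊤ : Submodule F (Fd ⧸ D.toSubmodule)) ≤
        (Set.range f).toFinset.card := hStop ▸ finrank_span_le_card (Set.range f)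
    rw [finrank_top] at h1
    refine h1.trans ?_
    rw [Set.toFinset_range]
    exact Finset.card_image_le.trans (by simp)
  -- rank-nullity: ψ is injective
  have hrange : LinearMap.range ψ = ⊤ := LinearMap.range_eq_top.mpr hψsurj
  have hrn := LinearMap.finrank_range_add_finrank_ker ψ
  rw [hrange, finrank_top, ← hd] at hrn
  have hker0 : Module.finrank F (LinearMap.ker ψ) = 0 := by omega
  have hker : LinearMap.ker ψ = ⊥ := Submodule.finrank_eq_zero.mp hker0
  -- conclude
  intro x hx
  have hgx : g x = 0 := by
    have hx0 : (LieIdeal.quotientMk I) x = 0 := (LieSubmodule.Quotient.mk_eq_zero').mpr hx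
    have hp0 : p x = 0 := by
      show e.toLieHom ((LieIdeal.quotientMk I) x) = 0
      rw [hx0]
      exact e.toLieHom.map_zero
    show (LieIdeal.quotientMk DS) (p x) = 0
    rw [hp0]
    exact (LieIdeal.quotientMk DS).map_zero
  have hmem : (Submodule.Quotient.mk x : Fd ⧸ D.toSubmodule) ∈ LinearMap.ker ψ := by
    rw [LinearMap.mem_ker, hψmk]
    exact hgx
  rw [hker, Submodule.mem_bot, Submodule.Quotient.mk_eq_zero] at hmem
  exact hmem

/-- The multiplicator `M` of the cover `L*` is contained in the center of `L*` and in the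
derived subalgebra `⁅L*, L*⁆`. -/
theorem lieMultiplicator_le_center_and_le_derived
    (F : Type u) [Field F] (L : Type v) [LieRing L] [LieAlgebra F L]
    [FiniteDimensional F L] [LieRing.IsNilpotent L]
    (d : ℕ) (hd : d = Module.finrank F (L ⧸ LieAlgebra.derivedSeries F L 1))
    (I : LieIdeal F (FreeLieAlgebra F (Fin d)))
    (e : (FreeLieAlgebra F (Fin d) ⧸ I) ≃ₗ⁅F⁆ L)
     :
    lieMultiplicator F d I ≤ LieAlgebra.center F (LieCover F d I) ∧
      lieMultiplicator F d I ≤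
        ⁅(⊤ : LieIdeal F (LieCover F d I)), (⊤ : LieIdeal F (LieCover F d I))⁆ := by
  set J : LieIdeal F (FreeLieAlgebra F (Fin d)) :=
    ⁅I, (⊤ : LieIdeal F (FreeLieAlgebra F (Fin d)))⁆ with hJ
  have hsurj : Function.Surjective (LieIdeal.quotientMk J) := LieIdeal.quotientMk_surjective J
  constructor
  · intro x hx
    obtain ⟨⟨z, hz⟩, rfl⟩ := LieIdeal.mem_map_of_surjective hsurj hx
    rw [LieAlgebra.center, LieModule.mem_maxTrivSubmodule]
    intro y
    obtain ⟨b, rfl⟩ := hsurj y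
    have hmem : ⁅b, z⁆ ∈ J := by
      rw [hJ, ← lie_skew]
      exact neg_mem (LieSubmodule.lie_mem_lie hz (LieSubmodule.mem_top _))
    calc ⁅(LieIdeal.quotientMk J) b, (LieIdeal.quotientMk J) ((⟨z, hz⟩ : I) : _)⁆
        = (LieIdeal.quotientMk J) ⁅b, z⁆ := ((LieIdeal.quotientMk J).map_lie b z).symm
      _ = 0 := (LieSubmodule.Quotient.mk_eq_zero').mpr hmem
  · have hle := lieIdeal_le_derived_of_equiv F L d hd I e
    calc lieMultiplicator F d I
        ≤ LieIdeal.map (LieIdeal.quotientMk J)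
          ⁅(⊤ : LieIdeal F (FreeLieAlgebra F (Fin d))), ⊤⁆ := LieIdeal.map_mono hle
      _ ≤ ⁅LieIdeal.map (LieIdeal.quotientMk J) ⊤, LieIdeal.map (LieIdeal.quotientMk J) ⊤⁆ :=
          LieIdeal.map_bracket_le _
      _ ≤ ⁅(⊤ : LieIdeal F (LieCover F d I)), ⊤⁆ :=
          LieSubmodule.mono_lie le_top le_top
end

section
/- A finite-dimensional nilpotent Lie algebra K is a central extension of L — that is, K possesses a Lie ideal J with J ⊆ ⁅K, K⁆ ∩ Z(K) and K/J ≅ L — if and only if K is isomorphic to L*/J' for some Lie ideal J' of the cover L* contained in the multiplicator M. -/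
section Aux
variable {R A B : Type*} [CommRing R] [LieRing A] [LieAlgebra R A] [LieRing B] [LieAlgebra R B]

theorem LieIdeal.quotientMk_apply (I : LieIdeal R A) (x : A) :
    LieIdeal.quotientMk I x = LieSubmodule.Quotient.mk (N := I) x := rfl

theorem LieIdeal.quotientMk_surjective_s13 (I : LieIdeal R A) :
    Function.Surjective (LieIdeal.quotientMk I) :=
  Submodule.mkQ_surjective I.toSubmodule

theorem LieIdeal.quotientMk_eq_zero_iff (I : LieIdeal R A) {x : A} :
    LieIdeal.quotientMk I x = 0 ↔ x ∈ I :=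
  LieSubmodule.Quotient.mk_eq_zero'

theorem LieIdeal.ker_quotientMk (I : LieIdeal R A) : (LieIdeal.quotientMk I).ker = I := by
  ext x
  rw [LieHom.mem_ker, LieIdeal.quotientMk_eq_zero_iff]

/-- Lift a Lie hom through a quotient by an ideal contained in its kernel. -/
def LieIdeal.quotLift (I : LieIdeal R A) (f : A →ₗ⁅R⁆ B) (h : I ≤ f.ker) :
    (A ⧸ I) →ₗ⁅R⁆ B :=
  { I.toSubmodule.liftQ f.toLinearMap (fun x hx => LieHom.mem_ker.mp (h hx)) with
    map_lie' := by
      rintro ⟨x⟩ ⟨y⟩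
      show I.toSubmodule.liftQ f.toLinearMap _
          ⁅LieSubmodule.Quotient.mk (N := I) x, LieSubmodule.Quotient.mk (N := I) y⁆ = _
      rw [← LieSubmodule.Quotient.mk_bracket]
      exact f.map_lie x y }

@[simp] theorem LieIdeal.quotLift_mk (I : LieIdeal R A) (f : A →ₗ⁅R⁆ B) (h : I ≤ f.ker) (x : A) :
    I.quotLift f h (LieIdeal.quotientMk I x) = f x := rfl

/-- First isomorphism theorem for surjective Lie algebra homs. -/
noncomputable def LieHom.quotKerEquivOfSurjective (f : A →ₗ⁅R⁆ B) (h : Function.Surjective f) :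
    (A ⧸ f.ker) ≃ₗ⁅R⁆ B :=
  f.quotKerEquivRange.trans <|
    (LieEquiv.ofEq f.range ⊤ (by
      ext x
      simpa [LieHom.mem_range] using h x)).trans LieSubalgebra.topEquiv

noncomputable def lieQuotEquivOfSurjective (f : A →ₗ⁅R⁆ B) (hf : Function.Surjective f)
    (I : LieIdeal R A) (hI : I = f.ker) : (A ⧸ I) ≃ₗ⁅R⁆ B := by
  rw [hI]; exact f.quotKerEquivOfSurjective hf

theorem FreeLieAlgebra.mem_of_forall_of_mem {X : Type*}
    (S : LieSubalgebra R (FreeLieAlgebra R X)) (hS : ∀ x, FreeLieAlgebra.of R x ∈ S)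
    (z : FreeLieAlgebra R X) : z ∈ S := by
  have h : S.incl.comp (FreeLieAlgebra.lift R fun x => (⟨FreeLieAlgebra.of R x, hS x⟩ : S)) =
      LieHom.id := by
    apply FreeLieAlgebra.hom_ext
    intro x
    simp [FreeLieAlgebra.lift_of_apply]
  have h2 := LieHom.congr_fun h z
  simp only [LieHom.coe_comp, Function.comp_apply, LieHom.coe_id, id_eq] at h2
  rw [← h2]
  exact ((FreeLieAlgebra.lift R fun x => (⟨FreeLieAlgebra.of R x, hS x⟩ : S)) z).2

end Aux

section Gen
variable {F : Type*} [Field F] {L : Type*} [LieRing L] [LieAlgebra F L] [FiniteDimensional F L]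

theorem LieHom.ker_le_derived_of_free (d : ℕ)
    (hd : d = Module.finrank F (L ⧸ LieAlgebra.derivedSeries F L 1))
    (q : FreeLieAlgebra F (Fin d) →ₗ⁅F⁆ L) (hq : Function.Surjective q) :
    q.ker ≤ LieAlgebra.derivedSeries F (FreeLieAlgebra F (Fin d)) 1 := by
  classical
  set FL := FreeLieAlgebra F (Fin d)
  set D : LieIdeal F FL := LieAlgebra.derivedSeries F FL 1 with hDdef
  have hD : D = ⁅(⊤ : LieIdeal F FL), (⊤ : LieIdeal F FL)⁆ := by
    rw [hDdef, LieAlgebra.derivedSeries_def, LieAlgebra.derivedSeriesOfIdeal_succ,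
      LieAlgebra.derivedSeriesOfIdeal_zero]
  set DL : LieIdeal F L := LieAlgebra.derivedSeries F L 1 with hDLdef
  have hDL : DL = ⁅(⊤ : LieIdeal F L), (⊤ : LieIdeal F L)⁆ := by
    rw [hDLdef, LieAlgebra.derivedSeries_def, LieAlgebra.derivedSeriesOfIdeal_succ,
      LieAlgebra.derivedSeriesOfIdeal_zero]
  -- the composite FL → L → L ⧸ DL kills D
  set rFL : FL →ₗ⁅F⁆ (L ⧸ DL) := (LieIdeal.quotientMk DL).comp q with hrFL
  have hDile : D ≤ rFL.ker := by
    rw [hD, LieSubmodule.lie_le_iff]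
    intro x _ m _
    rw [LieHom.mem_ker]
    show LieIdeal.quotientMk DL (q ⁅x, m⁆) = 0
    rw [q.map_lie, LieIdeal.quotientMk_eq_zero_iff, hDL]
    exact LieSubmodule.lie_mem_lie (LieSubmodule.mem_top _) (LieSubmodule.mem_top _)
  set r : (FL ⧸ D) →ₗ⁅F⁆ (L ⧸ DL) := D.quotLift rFL hDile with hr
  have hrsurj : Function.Surjective r := by
    intro y
    obtain ⟨z, rfl⟩ := LieIdeal.quotientMk_surjective_s13 DL y
    obtain ⟨w, rfl⟩ := hq z
    exact ⟨LieIdeal.quotientMk D w, rfl⟩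
  -- FL ⧸ D is spanned by images of the generators
  have hspan : Submodule.span F
      (Set.range fun i : Fin d => LieIdeal.quotientMk D (FreeLieAlgebra.of F i)) = ⊤ := by
    set W := Submodule.span F
      (Set.range fun i : Fin d => LieIdeal.quotientMk D (FreeLieAlgebra.of F i)) with hW
    rw [eq_top_iff]
    rintro w -
    obtain ⟨z, rfl⟩ := LieIdeal.quotientMk_surjective_s13 D w
    let S : LieSubalgebra F FL :=
      { Submodule.comap ((LieIdeal.quotientMk D) : FL →ₗ[F] FL ⧸ D) W with
        lie_mem' := fun {x y} _ _ => by
          have hz : LieIdeal.quotientMk D ⁅x, y⁆ = 0 := by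
            rw [LieIdeal.quotientMk_eq_zero_iff, hD]
            exact LieSubmodule.lie_mem_lie (LieSubmodule.mem_top _) (LieSubmodule.mem_top _)
          refine Submodule.mem_comap.mpr ?_
          show LieIdeal.quotientMk D ⁅x, y⁆ ∈ W
          rw [hz]
          exact W.zero_mem }
    have hz : z ∈ S := FreeLieAlgebra.mem_of_forall_of_mem S
      (fun i => Submodule.subset_span ⟨i, rfl⟩) z
    exact hz
  have hfin : FiniteDimensional F (FL ⧸ D) := by
    refine Module.finite_def.mpr ⟨Finset.univ.image
      (fun i : Fin d => LieIdeal.quotientMk D (FreeLieAlgebra.of F i)), ?_⟩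
    rw [Finset.coe_image, Finset.coe_univ, Set.image_univ]
    exact hspan
  have hle : Module.finrank F (FL ⧸ D) ≤ d := by
    have := finrank_le_of_span_eq_top (R := F) hspan
    simpa using this
  have hge : d ≤ Module.finrank F (FL ⧸ D) := by
    have hrsurj' : Function.Surjective r.toLinearMap := hrsurj
    have h1 : Module.finrank F (L ⧸ DL) =
        Module.finrank F (LinearMap.range r.toLinearMap) := by
      rw [LinearMap.range_eq_top.mpr hrsurj', finrank_top]
    calc d = Module.finrank F (L ⧸ DL) := hd
      _ = _ := h1
      _ ≤ Module.finrank F (FL ⧸ D) := LinearMap.finrank_range_le _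
  have heq : Module.finrank F (FL ⧸ D) = Module.finrank F (L ⧸ DL) := by omega
  have hinj : Function.Injective r :=
    (LinearMap.injective_iff_surjective_of_finrank_eq_finrank
      (f := r.toLinearMap) heq).mpr hrsurj
  intro x hx
  have h0 : r (LieIdeal.quotientMk D x) = 0 := by
    show rFL x = 0
    rw [hrFL]
    show LieIdeal.quotientMk DL (q x) = 0
    rw [LieHom.mem_ker.mp hx]
    exact map_zero _
  have := hinj (by rw [h0, map_zero] : r (LieIdeal.quotientMk D x) = r 0)
  rw [← LieIdeal.quotientMk_eq_zero_iff]
  exact this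
end Gen


/-- A finite-dimensional nilpotent Lie algebra `K` is a central extension of `L` — i.e. `K` has
a Lie ideal `J` with `J ⊆ ⁅K, K⁆ ∩ Z(K)` and `K ⧸ J ≅ L` — if and only if `K ≅ L* ⧸ J` for
some Lie ideal `J` of the cover `L*` contained in the multiplicator `M`. -/
theorem isCentralExtension_iff_quotient_of_lieCover
    (F : Type u) [Field F] (L : Type v) [LieRing L] [LieAlgebra F L]
    [FiniteDimensional F L] [LieRing.IsNilpotent L]
    (d : ℕ) (hd : d = Module.finrank F (L ⧸ LieAlgebra.derivedSeries F L 1))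
    (I : LieIdeal F (FreeLieAlgebra F (Fin d)))
    (e : (FreeLieAlgebra F (Fin d) ⧸ I) ≃ₗ⁅F⁆ L)
    (K : Type w) [LieRing K] [LieAlgebra F K]
    [FiniteDimensional F K] [LieRing.IsNilpotent K] :
    (∃ J : LieIdeal F K,
        J ≤ ⁅(⊤ : LieIdeal F K), (⊤ : LieIdeal F K)⁆ ⊓ LieAlgebra.center F K ∧
        Nonempty ((K ⧸ J) ≃ₗ⁅F⁆ L)) ↔
      ∃ J' : LieIdeal F (LieCover F d I), J' ≤ lieMultiplicator F d I ∧
        Nonempty ((LieCover F d I ⧸ J') ≃ₗ⁅F⁆ K) := by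
  classical
  set FL := FreeLieAlgebra F (Fin d) with hFL
  set C : LieIdeal F FL := ⁅I, (⊤ : LieIdeal F FL)⁆ with hC
  set q : FL →ₗ⁅F⁆ L := e.toLieHom.comp (LieIdeal.quotientMk I) with hqdef
  have hqsurj : Function.Surjective q := fun x => by
    obtain ⟨y, hy⟩ := e.surjective x
    obtain ⟨z, rfl⟩ := LieIdeal.quotientMk_surjective_s13 I y
    exact ⟨z, hy⟩
  have hqx : ∀ x : FL, q x = 0 ↔ x ∈ I := by
    intro x
    show e.toLieHom (LieIdeal.quotientMk I x) = 0 ↔ x ∈ I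
    rw [← LieIdeal.quotientMk_eq_zero_iff (I := I) (x := x)]
    constructor
    · intro h
      exact e.injective (by simpa using h)
    · intro h; rw [h]; simp
  have hqker : q.ker = I := by
    ext x; rw [LieHom.mem_ker]; exact hqx x
  have hCle : C ≤ I := LieSubmodule.lie_le_left I ⊤
  have hCleq : C ≤ q.ker := hqker ▸ hCle
  have hI_le_D : I ≤ LieAlgebra.derivedSeries F FL 1 :=
    hqker ▸ LieHom.ker_le_derived_of_free d hd q hqsurj
  have hMmem : ∀ x : FL, LieIdeal.quotientMk C x ∈ lieMultiplicator F d I ↔ x ∈ I := by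
    intro x
    constructor
    · intro hx
      obtain ⟨⟨y, hy⟩, hxy⟩ :=
        LieIdeal.mem_map_of_surjective (LieIdeal.quotientMk_surjective_s13 C) hx
      have hsub : x - y ∈ C := by
        rw [← LieIdeal.quotientMk_eq_zero_iff (I := C), map_sub, hxy, sub_self]
      have hxy2 : x = (x - y) + y := by abel
      rw [hxy2]
      exact I.add_mem (hCle hsub) hy
    · exact fun hx => LieIdeal.mem_map hx
  constructor
  · rintro ⟨J, hJ, ⟨eK⟩⟩
    have hJd : J ≤ ⁅(⊤ : LieIdeal F K), ⊤⁆ := hJ.trans inf_le_left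
    have hJc : J ≤ LieAlgebra.center F K := hJ.trans inf_le_right
    have hcen : ∀ j ∈ J, ∀ z : K, ⁅z, j⁆ = 0 := fun j hj z =>
      (LieModule.mem_maxTrivSubmodule F K K j).mp (hJc hj) z
    set e' : (FL ⧸ I) ≃ₗ⁅F⁆ (K ⧸ J) := e.trans eK.symm with he'
    have hgen : ∀ i : Fin d, ∃ x : K,
        LieIdeal.quotientMk J x = e' (LieIdeal.quotientMk I (FreeLieAlgebra.of F i)) :=
      fun i => LieIdeal.quotientMk_surjective_s13 J _
    choose g hg using hgen
    set φ : FL →ₗ⁅F⁆ K := FreeLieAlgebra.lift F g with hφ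
    have hcompx : ∀ x : FL,
        LieIdeal.quotientMk J (φ x) = e' (LieIdeal.quotientMk I x) := by
      have hcomp : (LieIdeal.quotientMk J).comp φ =
          e'.toLieHom.comp (LieIdeal.quotientMk I) := by
        apply FreeLieAlgebra.hom_ext
        intro i
        show LieIdeal.quotientMk J (φ (FreeLieAlgebra.of F i)) =
          e' (LieIdeal.quotientMk I (FreeLieAlgebra.of F i))
        rw [hφ, FreeLieAlgebra.lift_of_apply]
        exact hg i
      exact fun x => LieHom.congr_fun hcomp x
    have hφx : ∀ x : K, ∃ a : FL, x - φ a ∈ J := by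
      intro x
      obtain ⟨y, hy⟩ := e'.surjective (LieIdeal.quotientMk J x)
      obtain ⟨a, rfl⟩ := LieIdeal.quotientMk_surjective_s13 I y
      refine ⟨a, ?_⟩
      rw [← LieIdeal.quotientMk_eq_zero_iff (I := J), map_sub, hcompx]
      exact sub_eq_zero.mpr hy.symm
    have hbr : ∀ x y : K, ⁅x, y⁆ ∈ φ.range := by
      intro x y
      obtain ⟨a, ha⟩ := hφx x
      obtain ⟨b, hb⟩ := hφx y
      have h1 : ⁅x, y⁆ = ⁅φ a, y⁆ := by
        have h0 : ⁅x - φ a, y⁆ = 0 := by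
          rw [← lie_skew, hcen _ ha y, neg_zero]
        rw [sub_lie] at h0
        exact sub_eq_zero.mp h0
      have h2 : ⁅φ a, y⁆ = ⁅φ a, φ b⁆ := by
        have h0 : ⁅φ a, y - φ b⁆ = 0 := hcen _ hb (φ a)
        rw [lie_sub] at h0
        exact sub_eq_zero.mp h0
      rw [h1, h2, ← φ.map_lie]
      exact (φ.mem_range _).mpr ⟨⁅a, b⁆, rfl⟩
    have htopsub : (⁅(⊤ : LieIdeal F K), ⊤⁆ : LieIdeal F K).toSubmodule ≤
        φ.range.toSubmodule := by
      rw [LieSubmodule.lieIdeal_oper_eq_linear_span']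
      refine Submodule.span_le.mpr ?_
      rintro _ ⟨x, -, y, -, rfl⟩
      exact hbr x y
    have hφsurj : Function.Surjective φ := by
      intro x
      obtain ⟨a, ha⟩ := hφx x
      have h2 : x - φ a ∈ φ.range := htopsub (hJd ha)
      obtain ⟨b, hb⟩ := (φ.mem_range _).mp h2
      exact ⟨b + a, by rw [map_add, hb]; abel⟩
    have hφI : ∀ x ∈ I, φ x ∈ J := by
      intro x hx
      rw [← LieIdeal.quotientMk_eq_zero_iff (I := J), hcompx,
        (LieIdeal.quotientMk_eq_zero_iff I).mpr hx]
      exact e'.toLieHom.map_zero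
    have hCker : C ≤ φ.ker := by
      rw [hC, LieSubmodule.lie_le_iff]
      intro x hx m _
      rw [LieHom.mem_ker, φ.map_lie, ← lie_skew, hcen _ (hφI x hx) (φ m), neg_zero]
    set ψ : (FL ⧸ C) →ₗ⁅F⁆ K := C.quotLift φ hCker with hψ
    have hψsurj : Function.Surjective ψ := by
      intro x
      obtain ⟨a, ha⟩ := hφsurj x
      exact ⟨LieIdeal.quotientMk C a, ha⟩
    refine ⟨ψ.ker, ?_, ⟨ψ.quotKerEquivOfSurjective hψsurj⟩⟩
    intro x hx
    obtain ⟨y, rfl⟩ := LieIdeal.quotientMk_surjective_s13 C x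
    rw [hMmem]
    have h1 : φ y = 0 := LieHom.mem_ker.mp hx
    have h2 : e' (LieIdeal.quotientMk I y) = 0 := by
      rw [← hcompx, h1]
      exact map_zero _
    have h3 : LieIdeal.quotientMk I y = 0 :=
      e'.injective (h2.trans (e'.toLieHom.map_zero).symm)
    exact (LieIdeal.quotientMk_eq_zero_iff I).mp h3
  · rintro ⟨J', hJ', ⟨f⟩⟩
    set g : (FL ⧸ C) →ₗ⁅F⁆ K := f.toLieHom.comp (LieIdeal.quotientMk J') with hg
    have hgsurj : Function.Surjective g := by
      intro x
      obtain ⟨y, hy⟩ := f.surjective x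
      obtain ⟨z, rfl⟩ := LieIdeal.quotientMk_surjective_s13 J' y
      exact ⟨z, hy⟩
    have hgker : g.ker = J' := by
      ext x
      rw [LieHom.mem_ker]
      show f.toLieHom (LieIdeal.quotientMk J' x) = 0 ↔ x ∈ J'
      rw [← LieIdeal.quotientMk_eq_zero_iff (I := J')]
      constructor
      · intro h
        exact f.injective (h.trans (f.toLieHom.map_zero).symm)
      · intro h
        rw [h]
        exact f.toLieHom.map_zero
    set M : LieIdeal F (FL ⧸ C) := lieMultiplicator F d I with hM
    set J : LieIdeal F K := LieIdeal.map g M with hJdef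
    have hMd : M ≤ ⁅(⊤ : LieIdeal F (FL ⧸ C)), ⊤⁆ := by
      have h1 : I ≤ ⁅(⊤ : LieIdeal F FL), ⊤⁆ := by
        have h2 := hI_le_D
        rwa [LieAlgebra.derivedSeries_def, LieAlgebra.derivedSeriesOfIdeal_succ,
          LieAlgebra.derivedSeriesOfIdeal_zero] at h2
      calc M ≤ LieIdeal.map (LieIdeal.quotientMk C) ⁅(⊤ : LieIdeal F FL), ⊤⁆ :=
            LieIdeal.map_mono h1
        _ ≤ ⁅LieIdeal.map (LieIdeal.quotientMk C) ⊤, LieIdeal.map (LieIdeal.quotientMk C) ⊤⁆ :=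
            LieIdeal.map_bracket_le _
        _ ≤ ⁅⊤, ⊤⁆ := LieSubmodule.mono_lie le_top le_top
    refine ⟨J, le_inf ?_ ?_, ⟨?_⟩⟩
    · calc J ≤ LieIdeal.map g ⁅⊤, ⊤⁆ := LieIdeal.map_mono hMd
        _ ≤ ⁅LieIdeal.map g ⊤, LieIdeal.map g ⊤⁆ := LieIdeal.map_bracket_le _
        _ ≤ ⁅⊤, ⊤⁆ := LieSubmodule.mono_lie le_top le_top
    · intro z hz
      rw [LieModule.mem_maxTrivSubmodule]
      intro x
      obtain ⟨⟨m, hm⟩, rfl⟩ := LieIdeal.mem_map_of_surjective hgsurj hz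
      obtain ⟨v, rfl⟩ := hgsurj x
      obtain ⟨u, rfl⟩ := LieIdeal.quotientMk_surjective_s13 C v
      obtain ⟨⟨w, hw⟩, hwm⟩ :=
        LieIdeal.mem_map_of_surjective (LieIdeal.quotientMk_surjective_s13 C) hm
      show ⁅g (LieIdeal.quotientMk C u), g m⁆ = 0
      rw [← hwm, ← g.map_lie, ← (LieIdeal.quotientMk C).map_lie]
      have hvw : ⁅u, w⁆ ∈ C := by
        rw [hC, LieSubmodule.lie_comm]
        exact LieSubmodule.lie_mem_lie (LieSubmodule.mem_top _) hw
      rw [(LieIdeal.quotientMk_eq_zero_iff C).mpr hvw, map_zero]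
    · set θ : (FL ⧸ C) →ₗ⁅F⁆ L := C.quotLift q hCleq with hθ
      have hθsurj : Function.Surjective θ := by
        intro x
        obtain ⟨a, ha⟩ := hqsurj x
        exact ⟨LieIdeal.quotientMk C a, ha⟩
      have hMθ : M = θ.ker := by
        ext x
        obtain ⟨y, rfl⟩ := LieIdeal.quotientMk_surjective_s13 C x
        rw [LieHom.mem_ker]
        show LieIdeal.quotientMk C y ∈ lieMultiplicator F d I ↔ θ (LieIdeal.quotientMk C y) = 0
        rw [hMmem]
        exact (hqx y).symm
      set c : (FL ⧸ C) →ₗ⁅F⁆ (K ⧸ J) := (LieIdeal.quotientMk J).comp g with hc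
      have hcsurj : Function.Surjective c := by
        intro x
        obtain ⟨y, rfl⟩ := LieIdeal.quotientMk_surjective_s13 J x
        obtain ⟨z, hz⟩ := hgsurj y
        exact ⟨z, by show LieIdeal.quotientMk J (g z) = _; rw [hz]⟩
      have hMc : M = c.ker := by
        ext x
        rw [LieHom.mem_ker]
        show x ∈ M ↔ LieIdeal.quotientMk J (g x) = 0
        rw [LieIdeal.quotientMk_eq_zero_iff (I := J)]
        constructor
        · intro hx
          exact LieIdeal.mem_map hx
        · intro hx
          obtain ⟨⟨m, hm⟩, hmx⟩ := LieIdeal.mem_map_of_surjective hgsurj hx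
          have hsub : x - m ∈ J' := by
            rw [← hgker, LieHom.mem_ker, map_sub, hmx, sub_self]
          have hxm : x = (x - m) + m := by abel
          rw [hxm]
          exact M.add_mem (hJ' hsub) hm
      exact ((lieQuotEquivOfSurjective c hcsurj M hMc).symm.trans
        (lieQuotEquivOfSurjective θ hθsurj M hMθ))
end

section
/- Every Lie algebra automorphism α of L lifts to a Lie algebra automorphism α* of the cover L*, i.e., there exists an automorphism α* of L* satisfying ψ ∘ α* = α ∘ ψ, where ψ : L* → L is the natural epimorphism with kernel the multiplicator M. -/
open LieAlgebra Module

private lemma aux_finrank_le {F V W : Type*} [Field F] [AddCommGroup V] [Module F V]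
    [AddCommGroup W] [Module F W] [Module.Finite F V] (f : V →ₗ[F] W)
    (h : Function.Surjective f) : Module.finrank F W ≤ Module.finrank F V := by
  have := f.finrank_range_le
  rwa [LinearMap.range_eq_top.mpr h, finrank_top] at this

private lemma bijective_of_lift {R K : Type*} [CommRing R] [LieRing K] [LieAlgebra R K]
    (γ : K →ₗ⁅R⁆ K)
    (hcent : ∀ x y : K, ⁅γ x - x, y⁆ = 0)
    (hder : ∀ x : K, γ x - x ∈ derivedSeries R K 1) : Function.Bijective γ := by
  have hfix : ∀ z ∈ derivedSeries R K 1, γ z = z := by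
    have hDspan : ((derivedSeries R K 1 : LieIdeal R K) : Submodule R K) =
        Submodule.span R { m | ∃ x ∈ (⊤ : LieIdeal R K), ∃ n ∈ (⊤ : LieIdeal R K), ⁅x, n⁆ = m } := by
      rw [derivedSeries_def, derivedSeriesOfIdeal_succ, derivedSeriesOfIdeal_zero]
      exact LieSubmodule.lieIdeal_oper_eq_linear_span' ..
    suffices h : ∀ z ∈ Submodule.span R
        { m | ∃ x ∈ (⊤ : LieIdeal R K), ∃ n ∈ (⊤ : LieIdeal R K), ⁅x, n⁆ = m }, γ z = z by
      intro z hz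
      exact h z (by rw [← hDspan]; exact hz)
    intro z hz
    induction hz using Submodule.span_induction with
    | mem m hm =>
      obtain ⟨a, -, b, -, rfl⟩ := hm
      have ha : (γ a - a) + a = γ a := by abel
      have hb : (γ b - b) + b = γ b := by abel
      calc γ ⁅a, b⁆ = ⁅γ a, γ b⁆ := γ.map_lie a b
        _ = ⁅γ a - a, γ b⁆ + ⁅a, γ b⁆ := by rw [← add_lie, ha]
        _ = ⁅a, γ b⁆ := by rw [hcent, zero_add]
        _ = ⁅a, γ b - b⁆ + ⁅a, b⁆ := by rw [← lie_add, hb]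
        _ = ⁅a, b⁆ := by rw [← lie_skew a (γ b - b), hcent, neg_zero, zero_add]
    | zero => exact γ.map_zero
    | add x y _ _ hx hy => rw [map_add γ, hx, hy]
    | smul r x _ hx => rw [map_smul γ, hx]
  have hgg : ∀ x, γ (γ x) = γ x + (γ x - x) := by
    intro x
    have h1 : γ x = x + (γ x - x) := by abel
    calc γ (γ x) = γ (x + (γ x - x)) := by rw [← h1]
      _ = γ x + γ (γ x - x) := γ.map_add _ _
      _ = γ x + (γ x - x) := by rw [hfix _ (hder x)]
  constructor
  · intro a b hab
    have ha : a = γ a + γ a - γ (γ a) := by rw [hgg]; abel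
    have hb : b = γ b + γ b - γ (γ b) := by rw [hgg]; abel
    rw [ha, hb, hab]
  · intro y
    refine ⟨y + y - γ y, ?_⟩
    rw [map_sub γ, map_add γ, hgg]
    abel

/-- Every Lie algebra automorphism `α` of `L` lifts to an automorphism `α*` of the cover `L*`:
`ψ ∘ α* = α ∘ ψ`, where `ψ : L* → L` is the natural epimorphism with kernel the
multiplicator `M`. -/
theorem exists_lift_of_lieEquiv
    (F : Type u) [Field F] (L : Type v) [LieRing L] [LieAlgebra F L]
    [FiniteDimensional F L] [LieRing.IsNilpotent L]
    (d : ℕ) (hd : d = Module.finrank F (L ⧸ LieAlgebra.derivedSeries F L 1))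
    (I : LieIdeal F (FreeLieAlgebra F (Fin d)))
    (e : (FreeLieAlgebra F (Fin d) ⧸ I) ≃ₗ⁅F⁆ L)
    (ψ : LieCover F d I →ₗ⁅F⁆ L) (hψ : Function.Surjective ψ)
    (hker : ψ.ker = lieMultiplicator F d I) (α : L ≃ₗ⁅F⁆ L) :
    ∃ αs : LieCover F d I ≃ₗ⁅F⁆ LieCover F d I, ∀ x, ψ (αs x) = α (ψ x) := by
  classical
  set Fd := FreeLieAlgebra F (Fin d) with hFdDef
  set π : Fd →ₗ⁅F⁆ LieCover F d I :=
    LieIdeal.quotientMk ⁅I, (⊤ : LieIdeal F Fd)⁆ with hπDef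
  have hπsurj : Function.Surjective π := Submodule.Quotient.mk_surjective _
  have hπ0 : ∀ x ∈ (⁅I, (⊤ : LieIdeal F Fd)⁆ : LieIdeal F Fd), π x = 0 := fun x hx =>
    (Submodule.Quotient.mk_eq_zero _).mpr hx
  have hψπ0 : ∀ i ∈ I, ψ (π i) = 0 := by
    intro i hi
    have h1 : π i ∈ ψ.ker := by rw [hker]; exact LieIdeal.mem_map hi
    exact LieHom.mem_ker.mp h1
  -- M is central in the cover
  have hcent : ∀ m ∈ lieMultiplicator F d I, ∀ y : LieCover F d I, ⁅m, y⁆ = 0 := by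
    have hMle : lieMultiplicator F d I ≤ LieAlgebra.center F (LieCover F d I) := by
      rw [LieIdeal.map_le_iff_le_comap]
      intro i hi
      rw [LieIdeal.mem_comap]
      rw [LieModule.mem_maxTrivSubmodule]
      intro x
      obtain ⟨a, rfl⟩ := hπsurj x
      rw [← π.map_lie]
      refine hπ0 _ ?_
      rw [← lie_skew a i]
      exact neg_mem (LieSubmodule.lie_mem_lie hi (LieSubmodule.mem_top a))
    intro m hm y
    have h1 := (LieModule.mem_maxTrivSubmodule F _ _ m).mp (hMle hm) y
    rw [← lie_skew m y, h1, neg_zero]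
  -- the key lemma: I ≤ [Fd, Fd]
  have hQab : ∀ q r : L ⧸ derivedSeries F L 1, ⁅q, r⁆ = 0 := by
    set πL : L →ₗ⁅F⁆ L ⧸ derivedSeries F L 1 := LieIdeal.quotientMk (derivedSeries F L 1)
    have hs : Function.Surjective πL := Submodule.Quotient.mk_surjective _
    intro q r
    obtain ⟨a, rfl⟩ := hs q
    obtain ⟨b, rfl⟩ := hs r
    rw [← πL.map_lie]
    refine (Submodule.Quotient.mk_eq_zero _).mpr ?_
    show ⁅a, b⁆ ∈ derivedSeries F L 1
    rw [derivedSeries_def, derivedSeriesOfIdeal_succ, derivedSeriesOfIdeal_zero]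
    exact LieSubmodule.lie_mem_lie (LieSubmodule.mem_top a) (LieSubmodule.mem_top b)
  set πL : L →ₗ⁅F⁆ L ⧸ derivedSeries F L 1 := LieIdeal.quotientMk (derivedSeries F L 1) with hπLDef
  have hπLsurj : Function.Surjective πL := Submodule.Quotient.mk_surjective _
  set mkI : Fd →ₗ⁅F⁆ Fd ⧸ I := LieIdeal.quotientMk I with hmkIDef
  have hmkIsurj : Function.Surjective mkI := Submodule.Quotient.mk_surjective _
  set mkD : Fd →ₗ⁅F⁆ Fd ⧸ derivedSeries F Fd 1 :=
    LieIdeal.quotientMk (derivedSeries F Fd 1) with hmkDDef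
  have hmkDsurj : Function.Surjective mkD := Submodule.Quotient.mk_surjective _
  set p : Fd →ₗ⁅F⁆ L ⧸ derivedSeries F L 1 := πL.comp (e.toLieHom.comp mkI) with hpDef
  have hDker : (derivedSeries F Fd 1).toSubmodule ≤ LinearMap.ker p.toLinearMap := by
    rw [derivedSeries_def, derivedSeriesOfIdeal_succ, derivedSeriesOfIdeal_zero,
      LieSubmodule.lieIdeal_oper_eq_linear_span', Submodule.span_le]
    rintro _ ⟨a, -, b, -, rfl⟩
    simp only [SetLike.mem_coe, LinearMap.mem_ker, LieHom.coe_toLinearMap]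
    rw [p.map_lie]
    exact hQab _ _
  set pbar : (Fd ⧸ derivedSeries F Fd 1) →ₗ[F] (L ⧸ derivedSeries F L 1) :=
    Submodule.liftQ (derivedSeries F Fd 1).toSubmodule p.toLinearMap hDker with hpbarDef
  have hpbar : ∀ x, pbar (mkD x) = p x := fun _ => rfl
  have hpsurj : Function.Surjective pbar := by
    intro q
    obtain ⟨l, rfl⟩ := hπLsurj q
    obtain ⟨y, rfl⟩ := e.surjective l
    obtain ⟨x, rfl⟩ := hmkIsurj y
    exact ⟨mkD x, rfl⟩
  have hspan : ∀ y : Fd ⧸ derivedSeries F Fd 1,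
      y ∈ Submodule.span F (Set.range fun i : Fin d => mkD (FreeLieAlgebra.of F i)) := by
    set T := Submodule.span F (Set.range fun i : Fin d => mkD (FreeLieAlgebra.of F i)) with hTDef
    set K : LieSubalgebra F Fd :=
      { Submodule.comap (mkD.toLinearMap) T with
        lie_mem' := fun {x y} _ _ => by
          have h0 : mkD ⁅x, y⁆ = 0 := by
            refine (Submodule.Quotient.mk_eq_zero _).mpr ?_
            show ⁅x, y⁆ ∈ derivedSeries F Fd 1
            rw [derivedSeries_def, derivedSeriesOfIdeal_succ, derivedSeriesOfIdeal_zero]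
            exact LieSubmodule.lie_mem_lie (LieSubmodule.mem_top x) (LieSubmodule.mem_top y)
          show mkD ⁅x, y⁆ ∈ T
          rw [h0]
          exact T.zero_mem } with hKDef
    have hofK : ∀ i, FreeLieAlgebra.of F i ∈ K := by
      intro i
      show mkD (FreeLieAlgebra.of F i) ∈ T
      exact Submodule.subset_span ⟨i, rfl⟩
    set j : Fd →ₗ⁅F⁆ K := FreeLieAlgebra.lift F (fun i => ⟨FreeLieAlgebra.of F i, hofK i⟩) with hjDef
    have hinclj : K.incl.comp j = FreeLieAlgebra.lift F (FreeLieAlgebra.of F) := by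
      rw [← FreeLieAlgebra.lift_unique]
      funext i
      show K.incl (j (FreeLieAlgebra.of F i)) = FreeLieAlgebra.of F i
      rw [hjDef]
      rw [FreeLieAlgebra.lift_of_apply]
      rfl
    have hid : (LieHom.id : Fd →ₗ⁅F⁆ Fd) = FreeLieAlgebra.lift F (FreeLieAlgebra.of F) := by
      rw [← FreeLieAlgebra.lift_unique]
      rfl
    have hKtop : ∀ x, x ∈ K := by
      intro x
      have h := DFunLike.congr_fun (hinclj.trans hid.symm) x
      simp only [LieHom.comp_apply, LieHom.id_apply] at h
      rw [← h]
      exact (j x).2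
    intro y
    obtain ⟨x, rfl⟩ := hmkDsurj y
    exact hKtop x
  have hgs : Function.Surjective
      (Fintype.linearCombination F fun i : Fin d => mkD (FreeLieAlgebra.of F i)) := by
    rw [← LinearMap.range_eq_top, Fintype.range_linearCombination]
    exact eq_top_iff.mpr fun y _ => hspan y
  haveI hAfin : Module.Finite F (Fd ⧸ derivedSeries F Fd 1) :=
    Module.Finite.of_surjective _ hgs
  haveI hQfin : Module.Finite F (L ⧸ derivedSeries F L 1) :=
    Module.Finite.of_surjective πL.toLinearMap hπLsurj
  have hfinA : Module.finrank F (Fd ⧸ derivedSeries F Fd 1)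
      = Module.finrank F (L ⧸ derivedSeries F L 1) := by
    refine le_antisymm ?_ ?_
    · have h1 := aux_finrank_le _ hgs
      have h2 : Module.finrank F (Fin d → F) = d := by
        rw [Module.finrank_pi, Fintype.card_fin]
      rw [h2] at h1
      exact h1.trans hd.le
    · exact aux_finrank_le pbar hpsurj
  have hpinj : Function.Injective pbar :=
    (LinearMap.injective_iff_surjective_of_finrank_eq_finrank hfinA).mpr hpsurj
  have hI_le_D : I ≤ derivedSeries F Fd 1 := by
    intro x hx
    have h0 : pbar (mkD x) = pbar 0 := by
      rw [hpbar, map_zero]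
      show πL (e (mkI x)) = 0
      have h1 : mkI x = 0 := (Submodule.Quotient.mk_eq_zero _).mpr hx
      have he0 : e (0 : FreeLieAlgebra F (Fin d) ⧸ I) = 0 := e.toLieHom.map_zero
      rw [h1, he0, map_zero πL]
    have h2 := hpinj h0
    exact (Submodule.Quotient.mk_eq_zero _).mp h2
  -- M sits inside the derived algebra of the cover
  have hMder : ∀ m ∈ lieMultiplicator F d I, m ∈ derivedSeries F (LieCover F d I) 1 := by
    have h1 : lieMultiplicator F d I ≤ LieIdeal.map π (derivedSeries F Fd 1) :=
      LieIdeal.map_mono hI_le_D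
    have h2 : LieIdeal.map π (derivedSeries F Fd 1) ≤ derivedSeries F (LieCover F d I) 1 := by
      rw [derivedSeries_def, derivedSeries_def, derivedSeriesOfIdeal_succ,
        derivedSeriesOfIdeal_succ, derivedSeriesOfIdeal_zero, derivedSeriesOfIdeal_zero]
      refine (LieIdeal.map_bracket_le π).trans ?_
      exact LieSubmodule.mono_lie le_top le_top
    exact fun m hm => h2 (h1 hm)
  -- key construction: any automorphism of L lifts to an endomorphism of the cover
  have key : ∀ β : L ≃ₗ⁅F⁆ L, ∃ Φ : LieCover F d I →ₗ⁅F⁆ LieCover F d I,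
      ∀ x, ψ (Φ x) = β (ψ x) := by
    intro β
    obtain ⟨s, hs⟩ : ∃ s : L → LieCover F d I, ∀ l, ψ (s l) = l :=
      ⟨Function.surjInv hψ, Function.surjInv_eq hψ⟩
    set f : Fd →ₗ⁅F⁆ LieCover F d I :=
      FreeLieAlgebra.lift F (fun i => s (β (ψ (π (FreeLieAlgebra.of F i))))) with hfDef
    have hcomm : ∀ x, ψ (f x) = β (ψ (π x)) := by
      have h1 : ψ.comp f = (β.toLieHom.comp ψ).comp π := by
        apply (FreeLieAlgebra.lift F).symm.injective
        funext i
        rw [FreeLieAlgebra.lift_symm_apply, FreeLieAlgebra.lift_symm_apply]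
        show ψ (f (FreeLieAlgebra.of F i)) = β (ψ (π (FreeLieAlgebra.of F i)))
        rw [hfDef, FreeLieAlgebra.lift_of_apply, hs]
      intro x
      exact DFunLike.congr_fun h1 x
    have hf0 : ∀ i ∈ I, ∀ y : LieCover F d I, ⁅f i, y⁆ = 0 := by
      intro i hi y
      refine hcent (f i) ?_ y
      rw [← hker]
      refine LieHom.mem_ker.mpr ?_
      rw [hcomm i, hψπ0 i hi]
      exact β.toLieHom.map_zero
    have hJker : (⁅I, (⊤ : LieIdeal F Fd)⁆ : LieIdeal F Fd).toSubmodule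
        ≤ LinearMap.ker f.toLinearMap := by
      rw [LieSubmodule.lieIdeal_oper_eq_linear_span', Submodule.span_le]
      rintro _ ⟨a, ha, b, -, rfl⟩
      simp only [SetLike.mem_coe, LinearMap.mem_ker, LieHom.coe_toLinearMap]
      rw [f.map_lie]
      exact hf0 a ha (f b)
    set Φlin : LieCover F d I →ₗ[F] LieCover F d I :=
      Submodule.liftQ (⁅I, (⊤ : LieIdeal F Fd)⁆ : LieIdeal F Fd).toSubmodule
        f.toLinearMap hJker with hΦlinDef
    have hΦlin : ∀ x, Φlin (π x) = f x := fun _ => rfl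
    refine ⟨{ Φlin with map_lie' := ?_ }, ?_⟩
    · intro x y
      obtain ⟨a, rfl⟩ := hπsurj x
      obtain ⟨b, rfl⟩ := hπsurj y
      show Φlin ⁅π a, π b⁆ = ⁅Φlin (π a), Φlin (π b)⁆
      rw [← π.map_lie, hΦlin, hΦlin, hΦlin, f.map_lie]
    · intro x
      obtain ⟨a, rfl⟩ := hπsurj x
      show ψ (Φlin (π a)) = β (ψ (π a))
      rw [hΦlin]
      exact hcomm a
  obtain ⟨Φ, hΦ⟩ := key α
  obtain ⟨Ψ, hΨ⟩ := key α.symm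
  -- both composites differ from the identity by central elements in the derived algebra
  have hmem : ∀ (u : LieCover F d I →ₗ⁅F⁆ LieCover F d I),
      (∀ x, ψ (u x) = ψ x) → ∀ x, u x - x ∈ lieMultiplicator F d I := by
    intro u hu x
    rw [← hker]
    refine LieHom.mem_ker.mpr ?_
    rw [map_sub ψ, hu, sub_self]
  have hbij : ∀ (u : LieCover F d I →ₗ⁅F⁆ LieCover F d I),
      (∀ x, ψ (u x) = ψ x) → Function.Bijective u := by
    intro u hu
    refine bijective_of_lift u (fun x y => hcent _ (hmem u hu x) y) (fun x => hMder _ (hmem u hu x))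
  have h1 : Function.Bijective (Ψ.comp Φ) := by
    refine hbij _ fun x => ?_
    rw [LieHom.comp_apply, hΨ, hΦ, LieEquiv.symm_apply_apply]
  have h2 : Function.Bijective (Φ.comp Ψ) := by
    refine hbij _ fun x => ?_
    rw [LieHom.comp_apply, hΦ, hΨ, LieEquiv.apply_symm_apply]
  rw [LieHom.coe_comp] at h1 h2
  have hΦbij : Function.Bijective Φ :=
    ⟨Function.Injective.of_comp h1.injective, Function.Surjective.of_comp h2.surjective⟩
  exact ⟨LieEquiv.ofBijective Φ hΦbij, fun x => hΦ x⟩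
end

section
/- Let J₁ and J₂ be allowable subspaces of the multiplicator M of the cover L*, i.e., Lie ideals of L* properly contained in M with J₁ + N = M and J₂ + N = M, where N is the nucleus. Then the quotients L*/J₁ and L*/J₂ are isomorphic as Lie algebras if and only if there exists a Lie algebra automorphism θ of L* with θ(M) = M and θ(J₁) = J₂. -/
universe u v w

section Aux
variable {F : Type u} [Field F]

/-- Generation lemma: image of a hom from a free Lie algebra lands in any subalgebra
containing the images of the generators. -/
lemma freeLie_hom_mem {d : ℕ} {B : Type w} [LieRing B] [LieAlgebra F B]
    (f : FreeLieAlgebra F (Fin d) →ₗ⁅F⁆ B) (S : LieSubalgebra F B)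
    (h : ∀ i, f (FreeLieAlgebra.of F i) ∈ S) (x : FreeLieAlgebra F (Fin d)) : f x ∈ S := by
  let f' : FreeLieAlgebra F (Fin d) →ₗ⁅F⁆ S :=
    FreeLieAlgebra.lift F fun i => (⟨f (FreeLieAlgebra.of F i), h i⟩ : S)
  have : S.incl.comp f' = f := by
    apply FreeLieAlgebra.hom_ext
    intro i
    simp [f', FreeLieAlgebra.lift_of_apply]
  rw [← this]
  exact (f' x).2

/-- Lift a Lie algebra hom through a quotient by an ideal contained in its kernel. -/
def lieQuotientLift {L : Type v} [LieRing L] [LieAlgebra F L] {B : Type w} [LieRing B]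
    [LieAlgebra F B] (J : LieIdeal F L) (f : L →ₗ⁅F⁆ B)
    (h : J.toSubmodule ≤ LinearMap.ker (f : L →ₗ[F] B)) : (L ⧸ J) →ₗ⁅F⁆ B :=
  { J.toSubmodule.liftQ (f : L →ₗ[F] B) h with
    map_lie' := by
      rintro ⟨x⟩ ⟨y⟩
      exact f.map_lie x y }

@[simp] lemma lieQuotientLift_mk {L : Type v} [LieRing L] [LieAlgebra F L] {B : Type w}
    [LieRing B] [LieAlgebra F B] (J : LieIdeal F L) (f : L →ₗ⁅F⁆ B)
    (h : J.toSubmodule ≤ LinearMap.ker (f : L →ₗ[F] B)) (x : L) :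
    lieQuotientLift J f h (LieIdeal.quotientMk J x) = f x := rfl

end Aux

section Aux2
variable {F : Type u} [Field F] {L : Type v} [LieRing L] [LieAlgebra F L]

variable (F) in
/-- Iterated bracket spans. -/
noncomputable def brkSpan {d : ℕ} (g : Fin d → L) : ℕ → Submodule F L
  | 0 => Submodule.span F (Set.range g)
  | (k+1) => brkSpan g k ⊔ ⨆ i : Fin d,
      (brkSpan g k).map ((LieAlgebra.ad F L (g i)) : L →ₗ[F] L)

lemma brkSpan_mono {d : ℕ} (g : Fin d → L) : Monotone (brkSpan F g) :=
  monotone_nat_of_le_succ fun k => le_sup_left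

lemma brkSpan_fd {d : ℕ} (g : Fin d → L) (k : ℕ) : FiniteDimensional F (brkSpan F g k) := by
  induction k with
  | zero =>
      exact FiniteDimensional.span_of_finite F (Set.finite_range g)
  | succ k ih =>
      have : ∀ i : Fin d,
          FiniteDimensional F ((brkSpan F g k).map ((LieAlgebra.ad F L (g i)) : L →ₗ[F] L)) :=
        fun i => Module.Finite.map _ _
      exact Submodule.finiteDimensional_sup _ _

lemma brkSpan_gen_lie {d : ℕ} (g : Fin d → L) {k : ℕ} (i : Fin d) {y : L}
    (hy : y ∈ brkSpan F g k) : ⁅g i, y⁆ ∈ brkSpan F g (k + 1) := by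
  refine le_sup_right (α := Submodule F L) ?_
  exact Submodule.mem_iSup_of_mem i ⟨y, hy, rfl⟩

lemma brkSpan_bracket {d : ℕ} (g : Fin d → L) :
    ∀ j k : ℕ, ∀ x ∈ brkSpan F g j, ∀ y ∈ brkSpan F g k, ⁅x, y⁆ ∈ brkSpan F g (j + k + 1) := by
  intro j
  induction j with
  | zero =>
      intro k x hx y hy
      induction hx using Submodule.span_induction with
      | mem a ha =>
          obtain ⟨i, rfl⟩ := ha
          simpa using brkSpan_gen_lie g i hy
      | zero => simp
      | add a b _ _ ha hb => rw [add_lie]; exact add_mem ha hb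
      | smul t a _ ha => rw [smul_lie]; exact Submodule.smul_mem _ _ ha
  | succ j ihj =>
      intro k x hx y hy
      rw [brkSpan] at hx
      have hadd : ∀ a b : L, ⁅a, y⁆ ∈ brkSpan F g (j + 1 + k + 1) →
          ⁅b, y⁆ ∈ brkSpan F g (j + 1 + k + 1) → ⁅a + b, y⁆ ∈ brkSpan F g (j + 1 + k + 1) := by
        intro a b ha hb; rw [add_lie]; exact add_mem ha hb
      obtain ⟨a, ha, b, hb, rfl⟩ := Submodule.mem_sup.mp hx
      refine hadd a b ?_ ?_
      · exact brkSpan_mono g (by omega) (ihj k a ha y hy)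
      · refine Submodule.iSup_induction _ (motive := fun b => ⁅b, y⁆ ∈ brkSpan F g (j + 1 + k + 1))
          hb ?_ (by simp) (fun a b ha hb => hadd a b ha hb)
        rintro i b hbmem
        obtain ⟨w, hw, rfl⟩ := hbmem
        have hcalc : ⁅(LieAlgebra.ad F L (g i)) w, y⁆ = ⁅g i, ⁅w, y⁆⁆ - ⁅w, ⁅g i, y⁆⁆ := by
          simp [LieAlgebra.ad_apply, lie_lie]
        rw [hcalc]
        refine sub_mem ?_ ?_
        · have h1 : ⁅w, y⁆ ∈ brkSpan F g (j + k + 1) := ihj k w hw y hy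
          have := brkSpan_gen_lie g i h1
          exact brkSpan_mono g (by omega) this
        · have h2 : ⁅g i, y⁆ ∈ brkSpan F g (k + 1) := brkSpan_gen_lie g i hy
          have := ihj (k+1) w hw _ h2
          exact brkSpan_mono g (by omega) this

lemma lcs_le_span_brackets (k : ℕ) (U : Submodule F L)
    (h : ∀ x y : L, x ∈ (⊤ : Submodule F L) → y ∈ (LieModule.lowerCentralSeries F L L k) → ⁅x, y⁆ ∈ U) :
    (LieSubmodule.toSubmodule (LieModule.lowerCentralSeries F L L (k+1))) ≤ U := by
  rw [LieModule.lowerCentralSeries_succ, LieSubmodule.lieIdeal_oper_eq_linear_span']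
  rw [Submodule.span_le]
  rintro z ⟨x, hx, y, hy, rfl⟩
  exact h x y trivial hy

/-- A nilpotent Lie algebra generated (as a Lie algebra) by finitely many elements is
finite-dimensional. -/
lemma fd_of_gen_nilpotent {d : ℕ} (g : Fin d → L)
    (hg : ∀ S : LieSubalgebra F L, (∀ i, g i ∈ S) → ∀ x : L, x ∈ S)
    (n : ℕ) (hn : LieModule.lowerCentralSeries F L L n = ⊥) : FiniteDimensional F L := by
  -- claim: ∀ k, ∃ m, ⊤ ≤ brkSpan m ⊔ lcs (k+1)
  have key : ∀ k : ℕ, ∃ m : ℕ, (⊤ : Submodule F L) ≤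
      brkSpan F g m ⊔ (LieSubmodule.toSubmodule (LieModule.lowerCentralSeries F L L (k+1))) := by
    intro k
    induction k with
    | zero =>
        refine ⟨0, ?_⟩
        set U : Submodule F L := brkSpan F g 0 ⊔ _ with hU
        let S : LieSubalgebra F L :=
          { U with
            lie_mem' := by
              intro x y _ _
              refine le_sup_right (α := Submodule F L) ?_
              exact LieSubmodule.lie_mem_lie trivial (LieSubmodule.mem_top _) }
        intro x _
        refine hg S (fun i => ?_) x
        exact le_sup_left (α := Submodule F L) (Submodule.subset_span ⟨i, rfl⟩)
    | succ k ih =>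
        obtain ⟨m, hm⟩ := ih
        refine ⟨2 * m + 1, ?_⟩
        have step : (LieSubmodule.toSubmodule (LieModule.lowerCentralSeries F L L (k+1))) ≤
            brkSpan F g (2*m+1) ⊔ (LieSubmodule.toSubmodule (LieModule.lowerCentralSeries F L L (k+2))) := by
          apply lcs_le_span_brackets
          intro x y _ hy
          obtain ⟨a, ha, u, hu, rfl⟩ := Submodule.mem_sup.mp (hm (Submodule.mem_top (x := x)))
          obtain ⟨b, hb, v, hv, rfl⟩ := Submodule.mem_sup.mp (hm (Submodule.mem_top (x := y)))
          have h1 : ⁅a, b⁆ ∈ brkSpan F g (2*m+1) := by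
            have := brkSpan_bracket g m m a ha b hb
            exact brkSpan_mono g (by omega) this
          have h2 : ⁅a, v⁆ ∈ LieModule.lowerCentralSeries F L L (k+2) := by
            rw [LieModule.lowerCentralSeries_succ]
            exact LieSubmodule.lie_mem_lie (LieSubmodule.mem_top _) hv
          have h3 : ⁅u, b + v⁆ ∈ LieModule.lowerCentralSeries F L L (k+2) := by
            rw [LieModule.lowerCentralSeries_succ, LieSubmodule.lie_comm]
            exact LieSubmodule.lie_mem_lie hu (LieSubmodule.mem_top _)
          have hsplit : ⁅a + u, b + v⁆ = ⁅a, b⁆ + (⁅a, v⁆ + ⁅u, b + v⁆) := by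
            rw [add_lie, lie_add]; abel
          rw [hsplit]
          exact Submodule.add_mem _ (Submodule.mem_sup_left h1)
            (Submodule.mem_sup_right (add_mem h2 h3))
        refine hm.trans (sup_le ((brkSpan_mono g (by omega)).trans le_sup_left) (step.trans ?_))
        exact sup_le le_sup_left le_sup_right
  obtain ⟨m, hm⟩ := key n
  have hbot : LieModule.lowerCentralSeries F L L (n+1) = ⊥ := by
    have h := LieModule.antitone_lowerCentralSeries F L L (Nat.le_succ n)
    rw [hn] at h
    exact le_bot_iff.mp h
  rw [hbot] at hm
  have hm' : brkSpan F g m = ⊤ := by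
    refine eq_top_iff.mpr (hm.trans ?_)
    simp
  haveI := brkSpan_fd (F := F) g m
  exact Module.Finite.equiv ((LinearEquiv.ofEq _ _ hm').trans (Submodule.topEquiv))

end Aux2
section Aux3
variable {F : Type u} [Field F] {L : Type v} [LieRing L] [LieAlgebra F L]

lemma surjective_of_range_sup_lcs (f : L →ₗ⁅F⁆ L)
    (h : (⊤ : Submodule F L) ≤ LinearMap.range (f : L →ₗ[F] L) ⊔
      LieSubmodule.toSubmodule (LieModule.lowerCentralSeries F L L 1))
    (n : ℕ) (hn : LieModule.lowerCentralSeries F L L n = ⊥) : Function.Surjective f := by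
  set Rng : Submodule F L := LinearMap.range (f : L →ₗ[F] L) with hRng
  have key : ∀ k : ℕ, (⊤ : Submodule F L) ≤
      Rng ⊔ LieSubmodule.toSubmodule (LieModule.lowerCentralSeries F L L (k+1)) := by
    intro k
    induction k with
    | zero => exact h
    | succ k ih =>
        have step : LieSubmodule.toSubmodule (LieModule.lowerCentralSeries F L L (k+1)) ≤
            Rng ⊔ LieSubmodule.toSubmodule (LieModule.lowerCentralSeries F L L (k+2)) := by
          apply lcs_le_span_brackets
          intro x y _ _
          obtain ⟨a', ha', u, hu, rfl⟩ := Submodule.mem_sup.mp (ih (Submodule.mem_top (x := x)))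
          obtain ⟨b', hb', v, hv, rfl⟩ := Submodule.mem_sup.mp (ih (Submodule.mem_top (x := y)))
          obtain ⟨a, rfl⟩ := ha'
          obtain ⟨b, rfl⟩ := hb'
          have h1 : ⁅(f : L →ₗ[F] L) a, (f : L →ₗ[F] L) b⁆ ∈ Rng := ⟨⁅a, b⁆, f.map_lie a b⟩
          have h2 : ⁅(f : L →ₗ[F] L) a, v⁆ ∈ LieModule.lowerCentralSeries F L L (k+2) := by
            rw [LieModule.lowerCentralSeries_succ]
            exact LieSubmodule.lie_mem_lie (LieSubmodule.mem_top _) hv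
          have h3 : ⁅u, (f : L →ₗ[F] L) b + v⁆ ∈ LieModule.lowerCentralSeries F L L (k+2) := by
            rw [LieModule.lowerCentralSeries_succ, LieSubmodule.lie_comm]
            exact LieSubmodule.lie_mem_lie hu (LieSubmodule.mem_top _)
          have hsplit : ⁅(f : L →ₗ[F] L) a + u, (f : L →ₗ[F] L) b + v⁆ =
              ⁅(f : L →ₗ[F] L) a, (f : L →ₗ[F] L) b⁆ +
                (⁅(f : L →ₗ[F] L) a, v⁆ + ⁅u, (f : L →ₗ[F] L) b + v⁆) := by
            rw [add_lie, lie_add]; abel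
          rw [hsplit]
          exact Submodule.add_mem _ (Submodule.mem_sup_left h1)
            (Submodule.mem_sup_right (add_mem h2 h3))
        exact ih.trans (sup_le le_sup_left (step.trans le_rfl))
  have hbot : LieModule.lowerCentralSeries F L L (n+1) = ⊥ := by
    have h' := LieModule.antitone_lowerCentralSeries F L L (Nat.le_succ n)
    rw [hn] at h'
    exact le_bot_iff.mp h'
  have := key n
  rw [hbot] at this
  intro y
  have hy : y ∈ Rng := by
    have h2 := this (Submodule.mem_top (x := y))
    simpa using h2
  obtain ⟨x, hx⟩ := hy
  exact ⟨x, hx⟩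

end Aux3

section Aux4
variable {F : Type u} [Field F]

lemma derivedSeries_one_eq_lcs_one (L : Type v) [LieRing L] [LieAlgebra F L] :
    LieAlgebra.derivedSeries F L 1 = LieModule.lowerCentralSeries F L L 1 := by
  rw [LieAlgebra.derivedSeries_def, LieAlgebra.derivedSeriesOfIdeal_succ,
    LieAlgebra.derivedSeriesOfIdeal_zero, LieModule.lowerCentralSeries_succ,
    LieModule.lowerCentralSeries_zero]

lemma ideal_le_lcs_one (L : Type v) [LieRing L] [LieAlgebra F L] [FiniteDimensional F L]
    (d : ℕ) (hd : d = Module.finrank F (L ⧸ LieAlgebra.derivedSeries F L 1))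
    (I : LieIdeal F (FreeLieAlgebra F (Fin d)))
    (e : (FreeLieAlgebra F (Fin d) ⧸ I) ≃ₗ⁅F⁆ L) :
    I ≤ LieModule.lowerCentralSeries F (FreeLieAlgebra F (Fin d)) (FreeLieAlgebra F (Fin d)) 1 := by
  set Fd := FreeLieAlgebra F (Fin d) with hFd
  set P : LieIdeal F Fd := LieModule.lowerCentralSeries F Fd Fd 1 with hP
  set g : Fd →ₗ⁅F⁆ L := e.toLieHom.comp (LieIdeal.quotientMk I) with hg
  have hgsurj : Function.Surjective g := by
    intro z
    obtain ⟨q, hq⟩ := e.surjective z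
    obtain ⟨x, rfl⟩ := Submodule.Quotient.mk_surjective I.toSubmodule q
    exact ⟨x, hq⟩
  have hgker : ∀ x : Fd, g x = 0 ↔ x ∈ I := by
    intro x
    have h1 : g x = e (LieIdeal.quotientMk I x) := rfl
    rw [h1]
    constructor
    · intro h
      have h2 : LieIdeal.quotientMk I x = 0 := by
        apply e.injective
        simpa using h
      have h3 : Submodule.Quotient.mk (p := I.toSubmodule) x = 0 := h2
      rwa [Submodule.Quotient.mk_eq_zero] at h3
    · intro h
      have h3 : Submodule.Quotient.mk (p := I.toSubmodule) x = 0 := by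
        rw [Submodule.Quotient.mk_eq_zero]
        exact h
      have h2 : LieIdeal.quotientMk I x = 0 := h3
      show e.toLieHom (LieIdeal.quotientMk I x) = 0
      rw [h2]
      exact e.toLieHom.map_zero
  -- the abelian Lie algebra A = Fin d → F
  set A := (Fin d → F) with hA
  letI : LieRing A := LieRing.ofAssociativeRing
  set b : Module.Basis (Fin d) F A := Pi.basisFun F (Fin d) with hb
  set κ : Fd →ₗ⁅F⁆ A := FreeLieAlgebra.lift F (fun i => b i) with hκ
  have hAab : ∀ u v : A, ⁅u, v⁆ = 0 := by
    intro u v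
    rw [Ring.lie_def, mul_comm, sub_self]
  have hPker : ∀ x ∈ P, κ x = 0 := by
    intro x hx
    have hle : LieSubmodule.toSubmodule P ≤ LinearMap.ker (κ : Fd →ₗ[F] A) := by
      apply lcs_le_span_brackets
      intro a a' _ _
      simp only [LinearMap.mem_ker]
      show κ ⁅a, a'⁆ = 0
      rw [κ.map_lie, hAab]
    exact hle hx
  -- the ideal V = I ⊔ P and its quotient
  set V : LieIdeal F Fd := I ⊔ P with hV
  have habQV : ∀ u v : Fd ⧸ V, ⁅u, v⁆ = 0 := by
    intro u v
    obtain ⟨x, rfl⟩ := Submodule.Quotient.mk_surjective V.toSubmodule u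
    obtain ⟨y, rfl⟩ := Submodule.Quotient.mk_surjective V.toSubmodule v
    show ⁅LieIdeal.quotientMk V x, LieIdeal.quotientMk V y⁆ = 0
    rw [← (LieIdeal.quotientMk V).map_lie]
    show Submodule.Quotient.mk _ = 0
    rw [Submodule.Quotient.mk_eq_zero]
    refine le_sup_right (α := LieIdeal F Fd) (b := P) ?_
    rw [hP, LieModule.lowerCentralSeries_succ]
    exact LieSubmodule.lie_mem_lie (LieSubmodule.mem_top _) (LieSubmodule.mem_top _)
  set s : A →ₗ[F] (Fd ⧸ V) := b.constr F (fun i => LieIdeal.quotientMk V (FreeLieAlgebra.of F i))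
    with hs
  let sLie : A →ₗ⁅F⁆ (Fd ⧸ V) :=
    { s with
      map_lie' := by
        intro u v
        show s ⁅u, v⁆ = ⁅s u, s v⁆
        rw [hAab u v, map_zero, habQV] }
  have hcomp : sLie.comp κ = LieIdeal.quotientMk V := by
    apply FreeLieAlgebra.hom_ext
    intro i
    show s (κ (FreeLieAlgebra.of F i)) = _
    rw [hκ, FreeLieAlgebra.lift_of_apply, hs, Module.Basis.constr_basis]
  have hcomp' : ∀ x : Fd, sLie (κ x) = LieIdeal.quotientMk V x := fun x =>
    congrArg (fun (f : Fd →ₗ⁅F⁆ (Fd ⧸ V)) => f x) hcomp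
  -- (Fd ⧸ V) ≃ₗ (L ⧸ derivedSeries) hence finrank d
  set Der : Submodule F L := LieSubmodule.toSubmodule (LieAlgebra.derivedSeries F L 1) with hDer
  have hgP : ∀ x ∈ P, g x ∈ LieAlgebra.derivedSeries F L 1 := by
    intro x hx
    rw [derivedSeries_one_eq_lcs_one, ← LieIdeal.lowerCentralSeries_map_eq 1 hgsurj]
    exact LieIdeal.mem_map hx
  have hVcomap : ∀ x : Fd, g x ∈ LieAlgebra.derivedSeries F L 1 → x ∈ V := by
    intro x hgx
    rw [derivedSeries_one_eq_lcs_one, ← LieIdeal.lowerCentralSeries_map_eq 1 hgsurj] at hgx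
    obtain ⟨⟨w, hw⟩, hwx⟩ := LieIdeal.mem_map_of_surjective hgsurj hgx
    have hwx' : g w = g x := hwx
    have hxw : x - w ∈ I := by
      rw [← hgker]
      rw [map_sub g, hwx', sub_self]
    have : x = (x - w) + w := by abel
    rw [this]
    exact add_mem (le_sup_left (α := LieIdeal F Fd) (a := I) hxw)
      (le_sup_right (α := LieIdeal F Fd) (b := P) hw)
  have hle : V.toSubmodule ≤ Submodule.comap (g : Fd →ₗ[F] L) Der := by
    rw [hV, LieSubmodule.sup_toSubmodule]
    refine sup_le ?_ ?_
    · intro x hx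
      have : g x = 0 := (hgker x).mpr hx
      simp only [Submodule.mem_comap]
      show g x ∈ Der
      rw [this]; exact zero_mem _
    · intro x hx
      show g x ∈ Der
      exact hgP x hx
  set gbar : (Fd ⧸ V) →ₗ[F] (L ⧸ Der) := Submodule.mapQ V.toSubmodule Der (g : Fd →ₗ[F] L) hle
    with hgbar
  have hgbar_mk : ∀ x : Fd, gbar (LieIdeal.quotientMk V x) = Submodule.Quotient.mk (g x) := by
    intro x; rfl
  have hgbar_bij : Function.Bijective gbar := by
    constructor
    · rw [← LinearMap.ker_eq_bot]
      rw [Submodule.eq_bot_iff]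
      intro q hq
      obtain ⟨x, rfl⟩ := Submodule.Quotient.mk_surjective V.toSubmodule q
      rw [LinearMap.mem_ker] at hq
      have : gbar (LieIdeal.quotientMk V x) = 0 := hq
      rw [hgbar_mk, Submodule.Quotient.mk_eq_zero] at this
      have hxV : x ∈ V := hVcomap x this
      show Submodule.Quotient.mk x = 0
      rw [Submodule.Quotient.mk_eq_zero]
      exact hxV
    · intro q
      obtain ⟨z, rfl⟩ := Submodule.Quotient.mk_surjective Der q
      obtain ⟨x, rfl⟩ := hgsurj z
      exact ⟨LieIdeal.quotientMk V x, hgbar_mk x⟩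
  have hfinQ : FiniteDimensional F (Fd ⧸ V) := by
    have equivQ := LinearEquiv.ofBijective gbar hgbar_bij
    exact Module.Finite.equiv equivQ.symm
  have hfrQ : Module.finrank F (Fd ⧸ V) = d := by
    rw [(LinearEquiv.ofBijective gbar hgbar_bij).finrank_eq, hd]
    rfl
  -- s is surjective
  have hssurj : Function.Surjective s := by
    intro q
    obtain ⟨x, rfl⟩ := Submodule.Quotient.mk_surjective V.toSubmodule q
    exact ⟨κ x, hcomp' x⟩
  -- s is injective by rank count
  have hsinj : Function.Injective s := by
    rw [← LinearMap.ker_eq_bot]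
    have hrk := LinearMap.finrank_range_add_finrank_ker s
    rw [LinearMap.range_eq_top.mpr hssurj] at hrk
    have hA_rank : Module.finrank F A = d := by
      show Module.finrank F (Fin d → F) = d
      rw [Module.finrank_pi]
      simp
    have htop : Module.finrank F (⊤ : Submodule F (Fd ⧸ V)) = Module.finrank F (Fd ⧸ V) :=
      finrank_top F _
    rw [htop, hfrQ, hA_rank] at hrk
    have : Module.finrank F (LinearMap.ker s) = 0 := by omega
    exact Submodule.finrank_eq_zero.mp this
  -- conclude: κ kills I
  have hκI : ∀ x ∈ I, κ x = 0 := by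
    intro x hx
    apply hsinj
    show sLie (κ x) = s 0
    rw [map_zero, hcomp' x]
    show Submodule.Quotient.mk x = 0
    rw [Submodule.Quotient.mk_eq_zero]
    exact le_sup_left (α := LieIdeal F Fd) (a := I) hx
  -- ker κ ≤ P via the quotient Fd ⧸ P
  set κbar : (Fd ⧸ P) →ₗ[F] A := Submodule.liftQ P.toSubmodule (κ : Fd →ₗ[F] A) (by
      intro x hx
      simp only [LinearMap.mem_ker]
      exact hPker x hx) with hκbar
  have hκbar_inj : Function.Injective κbar := by
    -- Fd ⧸ P is spanned by images of generators
    have hspan : ∀ q : Fd ⧸ P, q ∈ Submodule.span F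
        (Set.range fun i => LieIdeal.quotientMk P (FreeLieAlgebra.of F i)) := by
      intro q
      obtain ⟨x, rfl⟩ := Submodule.Quotient.mk_surjective P.toSubmodule q
      set U : Submodule F (Fd ⧸ P) := Submodule.span F
        (Set.range fun i => LieIdeal.quotientMk P (FreeLieAlgebra.of F i)) with hU
      have habP : ∀ u v : Fd ⧸ P, ⁅u, v⁆ = 0 := by
        intro u v
        obtain ⟨a, rfl⟩ := Submodule.Quotient.mk_surjective P.toSubmodule u
        obtain ⟨a', rfl⟩ := Submodule.Quotient.mk_surjective P.toSubmodule v
        show ⁅LieIdeal.quotientMk P a, LieIdeal.quotientMk P a'⁆ = 0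
        rw [← (LieIdeal.quotientMk P).map_lie]
        show Submodule.Quotient.mk _ = 0
        rw [Submodule.Quotient.mk_eq_zero]
        rw [hP, LieModule.lowerCentralSeries_succ]
        exact LieSubmodule.lie_mem_lie (LieSubmodule.mem_top _) (LieSubmodule.mem_top _)
      let S : LieSubalgebra F (Fd ⧸ P) :=
        { U with
          lie_mem' := by
            intro u v _ _
            rw [habP]
            exact U.zero_mem }
      exact freeLie_hom_mem (LieIdeal.quotientMk P) S
        (fun i => Submodule.subset_span ⟨i, rfl⟩) x
    have hbasis : ∀ i, κbar (LieIdeal.quotientMk P (FreeLieAlgebra.of F i)) = b i := by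
      intro i
      show κ (FreeLieAlgebra.of F i) = b i
      rw [hκ, FreeLieAlgebra.lift_of_apply]
    rw [injective_iff_map_eq_zero]
    intro q hq
    obtain ⟨t, rfl⟩ := (Submodule.mem_span_range_iff_exists_fun F).mp (hspan q)
    have : ∑ i, t i • b i = 0 := by
      rw [← hq, map_sum]
      congr 1
      ext i
      rw [map_smul, hbasis]
    have ht : ∀ i, t i = 0 := by
      have hli := b.linearIndependent
      rw [Fintype.linearIndependent_iff] at hli
      exact hli t this
    simp [ht]
  intro x hx
  have : κbar (LieIdeal.quotientMk P x) = 0 := by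
    show κ x = 0
    exact hκI x hx
  have h0 : LieIdeal.quotientMk P x = 0 := by
    apply hκbar_inj
    rw [this, map_zero]
  show x ∈ P
  have : Submodule.Quotient.mk (p := P.toSubmodule) x = 0 := h0
  rwa [Submodule.Quotient.mk_eq_zero] at this

end Aux4

/-- Let `J₁`, `J₂` be allowable subspaces of the multiplicator `M` of the cover `L*`
(Lie ideals properly contained in `M` with `Jᵢ + N = M`, `N = γ_{c+1}(L*)` the nucleus).
Then `L* ⧸ J₁ ≅ L* ⧸ J₂` as Lie algebras if and only if some Lie algebra automorphism `θ`
of `L*` maps `M` onto `M` and `J₁` onto `J₂`. -/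
theorem quotient_lieEquiv_iff_exists_automorphism
    (F : Type u) [Field F] (L : Type v) [LieRing L] [LieAlgebra F L]
    [FiniteDimensional F L] [LieRing.IsNilpotent L] (c : ℕ)
    (hc : LieModule.lowerCentralSeries F L L c = ⊥)
    (hc_min : ∀ k, LieModule.lowerCentralSeries F L L k = ⊥ → c ≤ k)
    (d : ℕ) (hd : d = Module.finrank F (L ⧸ LieAlgebra.derivedSeries F L 1))
    (I : LieIdeal F (FreeLieAlgebra F (Fin d)))
    (e : (FreeLieAlgebra F (Fin d) ⧸ I) ≃ₗ⁅F⁆ L)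
    (J₁ J₂ : LieIdeal F (LieCover F d I))
    (h₁ : J₁ < lieMultiplicator F d I)
    (h₁' : J₁ ⊔ LieModule.lowerCentralSeries F (LieCover F d I) (LieCover F d I) c =
      lieMultiplicator F d I)
    (h₂ : J₂ < lieMultiplicator F d I)
    (h₂' : J₂ ⊔ LieModule.lowerCentralSeries F (LieCover F d I) (LieCover F d I) c =
      lieMultiplicator F d I) :
    Nonempty ((LieCover F d I ⧸ J₁) ≃ₗ⁅F⁆ (LieCover F d I ⧸ J₂)) ↔
      ∃ θ : LieCover F d I ≃ₗ⁅F⁆ LieCover F d I,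
        LieIdeal.map θ.toLieHom (lieMultiplicator F d I) = lieMultiplicator F d I ∧
        LieIdeal.map θ.toLieHom J₁ = J₂ := by
  classical
  set Fd := FreeLieAlgebra F (Fin d) with hFd
  set K : LieIdeal F Fd := ⁅I, (⊤ : LieIdeal F Fd)⁆ with hK
  set p : Fd →ₗ⁅F⁆ LieCover F d I := LieIdeal.quotientMk K with hp
  have hMdef : lieMultiplicator F d I = LieIdeal.map p I := rfl
  have hpsurj : Function.Surjective p := Submodule.Quotient.mk_surjective _
  have hpker : ∀ x : Fd, p x = 0 ↔ x ∈ K := by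
    intro x
    show Submodule.Quotient.mk x = 0 ↔ _
    rw [Submodule.Quotient.mk_eq_zero]
    rfl
  have hkerp : p.ker = K := by
    ext x
    rw [LieHom.mem_ker]
    exact hpker x
  -- the projection Fd → L
  set g : Fd →ₗ⁅F⁆ L := e.toLieHom.comp (LieIdeal.quotientMk I) with hg
  have hgsurj : Function.Surjective g := by
    intro z
    obtain ⟨q, hq⟩ := e.surjective z
    obtain ⟨x, rfl⟩ := Submodule.Quotient.mk_surjective I.toSubmodule q
    exact ⟨x, hq⟩
  have hgker : ∀ x : Fd, g x = 0 ↔ x ∈ I := by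
    intro x
    have h1 : g x = e (LieIdeal.quotientMk I x) := rfl
    rw [h1]
    constructor
    · intro h
      have h2 : LieIdeal.quotientMk I x = 0 := by
        apply e.injective
        simpa using h
      have h3 : Submodule.Quotient.mk (p := I.toSubmodule) x = 0 := h2
      rwa [Submodule.Quotient.mk_eq_zero] at h3
    · intro h
      have h3 : Submodule.Quotient.mk (p := I.toSubmodule) x = 0 := by
        rw [Submodule.Quotient.mk_eq_zero]
        exact h
      have h2 : LieIdeal.quotientMk I x = 0 := h3
      show e.toLieHom (LieIdeal.quotientMk I x) = 0
      rw [h2]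
      exact e.toLieHom.map_zero
  -- γ_c(Fd) ≤ I
  have hlcsI : LieModule.lowerCentralSeries F Fd Fd c ≤ I := by
    intro x hx
    have h1 : LieIdeal.map g (LieModule.lowerCentralSeries F Fd Fd c) =
        LieModule.lowerCentralSeries F L L c := LieIdeal.lowerCentralSeries_map_eq c hgsurj
    rw [hc] at h1
    have h2 : g x ∈ (⊥ : LieIdeal F L) := h1 ▸ LieIdeal.mem_map hx
    rw [LieSubmodule.mem_bot] at h2
    exact (hgker x).mp h2
  -- γ_{c+1}(Fd) ≤ K, so L* is nilpotent of class ≤ c+1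
  have hlcsK : LieModule.lowerCentralSeries F Fd Fd (c+1) ≤ K := by
    rw [LieModule.lowerCentralSeries_succ, hK]
    calc ⁅(⊤ : LieIdeal F Fd), LieModule.lowerCentralSeries F Fd Fd c⁆
        ≤ ⁅(⊤ : LieIdeal F Fd), I⁆ := LieSubmodule.mono_lie_right _ hlcsI
      _ = ⁅I, (⊤ : LieIdeal F Fd)⁆ := LieSubmodule.lie_comm _ _
  have hnil : LieModule.lowerCentralSeries F (LieCover F d I) (LieCover F d I) (c+1) = ⊥ := by
    rw [← LieIdeal.lowerCentralSeries_map_eq (c+1) hpsurj]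
    rw [LieIdeal.map_eq_bot_iff, hkerp]
    exact hlcsK
  -- (lieMultiplicator F d I) is central
  have hptop : LieIdeal.map p ⊤ = ⊤ := by
    rw [eq_top_iff]
    intro z _
    obtain ⟨x, rfl⟩ := hpsurj z
    exact LieIdeal.mem_map trivial
  have hMtop : ⁅(lieMultiplicator F d I), (⊤ : LieIdeal F (LieCover F d I))⁆ = ⊥ := by
    rw [hMdef, ← hptop, ← LieIdeal.map_bracket_eq p hpsurj]
    rw [LieIdeal.map_eq_bot_iff, hkerp]
  -- L* is finite-dimensional
  haveI hFD : FiniteDimensional F (LieCover F d I) := by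
    apply fd_of_gen_nilpotent (fun i => p (FreeLieAlgebra.of F i)) ?_ (c+1) hnil
    intro S hS x
    obtain ⟨y, rfl⟩ := hpsurj x
    exact freeLie_hom_mem p S hS y
  -- (lieMultiplicator F d I) ≤ γ₁(L*)
  have hM1 : (lieMultiplicator F d I) ≤ LieModule.lowerCentralSeries F (LieCover F d I) (LieCover F d I) 1 := by
    rw [hMdef, ← LieIdeal.lowerCentralSeries_map_eq 1 hpsurj]
    exact LieIdeal.map_mono (ideal_le_lcs_one L d hd I e)
  -- quotient projections
  set π₁ : LieCover F d I →ₗ⁅F⁆ (LieCover F d I ⧸ J₁) := LieIdeal.quotientMk J₁ with hπ₁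
  set π₂ : LieCover F d I →ₗ⁅F⁆ (LieCover F d I ⧸ J₂) := LieIdeal.quotientMk J₂ with hπ₂
  have hπ₁surj : Function.Surjective π₁ := Submodule.Quotient.mk_surjective _
  have hπ₂surj : Function.Surjective π₂ := Submodule.Quotient.mk_surjective _
  have hπ₁ker : ∀ z, π₁ z = 0 ↔ z ∈ J₁ := by
    intro z
    show Submodule.Quotient.mk z = 0 ↔ _
    rw [Submodule.Quotient.mk_eq_zero]
    rfl
  have hπ₂ker : ∀ z, π₂ z = 0 ↔ z ∈ J₂ := by
    intro z
    show Submodule.Quotient.mk z = 0 ↔ _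
    rw [Submodule.Quotient.mk_eq_zero]
    rfl
  have hMQ₁ : LieIdeal.map π₁ (lieMultiplicator F d I) =
      LieModule.lowerCentralSeries F (LieCover F d I ⧸ J₁) (LieCover F d I ⧸ J₁) c := by
    rw [← h₁', LieIdeal.map_sup]
    have h0 : LieIdeal.map π₁ J₁ = ⊥ := by
      rw [LieIdeal.map_eq_bot_iff]
      intro z hz
      rw [LieHom.mem_ker]
      exact (hπ₁ker z).mpr hz
    rw [h0, bot_sup_eq, LieIdeal.lowerCentralSeries_map_eq c hπ₁surj]
  have hMQ₂ : LieIdeal.map π₂ (lieMultiplicator F d I) =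
      LieModule.lowerCentralSeries F (LieCover F d I ⧸ J₂) (LieCover F d I ⧸ J₂) c := by
    rw [← h₂', LieIdeal.map_sup]
    have h0 : LieIdeal.map π₂ J₂ = ⊥ := by
      rw [LieIdeal.map_eq_bot_iff]
      intro z hz
      rw [LieHom.mem_ker]
      exact (hπ₂ker z).mpr hz
    rw [h0, bot_sup_eq, LieIdeal.lowerCentralSeries_map_eq c hπ₂surj]
  constructor
  · -- hard direction
    rintro ⟨φ⟩
    have hφsurj : Function.Surjective φ.toLieHom := φ.surjective
    have hφN : LieIdeal.map φ.toLieHom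
        (LieModule.lowerCentralSeries F (LieCover F d I ⧸ J₁) (LieCover F d I ⧸ J₁) c) =
        LieModule.lowerCentralSeries F (LieCover F d I ⧸ J₂) (LieCover F d I ⧸ J₂) c :=
      LieIdeal.lowerCentralSeries_map_eq c hφsurj
    -- choose lifts of the images of the generators
    have hex : ∀ i : Fin d, ∃ z : LieCover F d I,
        π₂ z = φ (π₁ (p (FreeLieAlgebra.of F i))) := fun i => hπ₂surj _
    choose y hy using hex
    set ψ : Fd →ₗ⁅F⁆ LieCover F d I := FreeLieAlgebra.lift F y with hψ
    have hcommhom : π₂.comp ψ = (φ.toLieHom.comp π₁).comp p := by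
      apply FreeLieAlgebra.hom_ext
      intro i
      show π₂ (ψ (FreeLieAlgebra.of F i)) = φ.toLieHom (π₁ (p (FreeLieAlgebra.of F i)))
      rw [hψ, FreeLieAlgebra.lift_of_apply]
      exact hy i
    have hcomm : ∀ x : Fd, π₂ (ψ x) = φ (π₁ (p x)) := fun x =>
      congrArg (fun (f : Fd →ₗ⁅F⁆ (LieCover F d I ⧸ J₂)) => f x) hcommhom
    -- a general fact: an element whose π₂-image is in map π₂ (lieMultiplicator F d I) lies in (lieMultiplicator F d I)
    have hpull : ∀ z : LieCover F d I, π₂ z ∈ LieIdeal.map π₂ (lieMultiplicator F d I) → z ∈ (lieMultiplicator F d I) := by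
      intro z hz
      obtain ⟨⟨m, hm⟩, hmz⟩ := LieIdeal.mem_map_of_surjective hπ₂surj hz
      have hmz' : π₂ m = π₂ z := hmz
      have hsub : z - m ∈ J₂ := by
        rw [← hπ₂ker]
        rw [map_sub π₂, hmz', sub_self]
      have hzm : z = (z - m) + m := by abel
      rw [hzm]
      exact add_mem (h₂.le hsub) hm
    have hψI : ∀ x ∈ I, ψ x ∈ (lieMultiplicator F d I) := by
      intro x hx
      apply hpull
      rw [hcomm]
      have h2 : π₁ (p x) ∈ LieIdeal.map π₁ (lieMultiplicator F d I) := by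
        rw [hMdef]
        exact LieIdeal.mem_map (LieIdeal.mem_map hx)
      rw [hMQ₁] at h2
      have h3 : φ (π₁ (p x)) ∈ LieIdeal.map φ.toLieHom
          (LieModule.lowerCentralSeries F (LieCover F d I ⧸ J₁) (LieCover F d I ⧸ J₁) c) :=
        LieIdeal.mem_map h2
      rw [hφN, ← hMQ₂] at h3
      exact h3
    -- ψ kills K
    have hψK : K ≤ ψ.ker := by
      rw [← LieIdeal.map_eq_bot_iff]
      have h4 : LieIdeal.map ψ K ≤ ⁅(lieMultiplicator F d I), (⊤ : LieIdeal F (LieCover F d I))⁆ := by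
        rw [hK]
        refine (LieIdeal.map_bracket_le ψ).trans ?_
        refine LieSubmodule.mono_lie ?_ le_top
        rw [LieIdeal.map_le_iff_le_comap]
        intro x hx
        exact hψI x hx
      rw [hMtop] at h4
      exact le_bot_iff.mp h4
    set θ₀ : LieCover F d I →ₗ⁅F⁆ LieCover F d I := lieQuotientLift K ψ (by
      intro x hx
      simp only [LinearMap.mem_ker]
      exact LieHom.mem_ker.mp (hψK hx)) with hθ₀
    have hθ₀p : ∀ x : Fd, θ₀ (p x) = ψ x := fun x => rfl
    have hπθ : ∀ z : LieCover F d I, π₂ (θ₀ z) = φ (π₁ z) := by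
      intro z
      obtain ⟨x, rfl⟩ := hpsurj z
      rw [hθ₀p, hcomm]
    -- θ₀ is surjective
    have hθ₀surj : Function.Surjective θ₀ := by
      apply surjective_of_range_sup_lcs θ₀ ?_ (c+1) hnil
      intro z _
      obtain ⟨w, hw⟩ := hφsurj (π₂ z)
      obtain ⟨u, rfl⟩ := hπ₁surj w
      have hw' : φ (π₁ u) = π₂ z := hw
      have hsub : z - θ₀ u ∈ J₂ := by
        rw [← hπ₂ker, map_sub π₂, hπθ u, hw', sub_self]
      have hzu : z = θ₀ u + (z - θ₀ u) := by abel
      rw [hzu]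
      exact Submodule.add_mem _ (Submodule.mem_sup_left ⟨u, rfl⟩)
        (Submodule.mem_sup_right (hM1 (h₂.le hsub)))
    have hθ₀inj : Function.Injective θ₀ := by
      have := (LinearMap.injective_iff_surjective
        (f := (θ₀ : LieCover F d I →ₗ[F] LieCover F d I))).mpr hθ₀surj
      exact this
    have hbij : Function.Bijective (θ₀ : LieCover F d I →ₗ[F] LieCover F d I) :=
      ⟨hθ₀inj, hθ₀surj⟩
    set lin : LieCover F d I ≃ₗ[F] LieCover F d I :=
      LinearEquiv.ofBijective (θ₀ : LieCover F d I →ₗ[F] LieCover F d I) hbij with hlin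
    set θ : LieCover F d I ≃ₗ⁅F⁆ LieCover F d I :=
      { θ₀ with
        invFun := lin.symm
        left_inv := lin.left_inv
        right_inv := lin.right_inv } with hθ
    have hθhom : θ.toLieHom = θ₀ := rfl
    -- finrank facts
    have hfr12 : Module.finrank F J₁.toSubmodule = Module.finrank F J₂.toSubmodule := by
      have q1 := Submodule.finrank_quotient_add_finrank J₁.toSubmodule
      have q2 := Submodule.finrank_quotient_add_finrank J₂.toSubmodule
      have qe : Module.finrank F (LieCover F d I ⧸ J₁) =
          Module.finrank F (LieCover F d I ⧸ J₂) := φ.toLinearEquiv.finrank_eq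
      have q1' : Module.finrank F (LieCover F d I ⧸ J₁) + Module.finrank F J₁.toSubmodule =
          Module.finrank F (LieCover F d I) := q1
      have q2' : Module.finrank F (LieCover F d I ⧸ J₂) + Module.finrank F J₂.toSubmodule =
          Module.finrank F (LieCover F d I) := q2
      omega
    have hmapfr : ∀ (J : LieIdeal F (LieCover F d I)),
        Module.finrank F (LieIdeal.map θ₀ J).toSubmodule = Module.finrank F J.toSubmodule := by
      intro J
      have h5 : LieSubmodule.toSubmodule (LieIdeal.map θ₀ J) =
          Submodule.map (θ₀ : LieCover F d I →ₗ[F] LieCover F d I) J.toSubmodule :=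
        LieIdeal.coe_map_of_surjective hθ₀surj
      have h6 : Submodule.map (θ₀ : LieCover F d I →ₗ[F] LieCover F d I) J.toSubmodule =
          Submodule.map (lin : LieCover F d I →ₗ[F] LieCover F d I) J.toSubmodule := rfl
      have h7 := LinearEquiv.finrank_map_eq lin J.toSubmodule
      show Module.finrank F (LieSubmodule.toSubmodule (LieIdeal.map θ₀ J)) =
        Module.finrank F J.toSubmodule
      rw [h5, h6]
      exact h7
    -- map θ₀ J₁ = J₂
    have hJle : LieIdeal.map θ₀ J₁ ≤ J₂ := by
      rw [LieIdeal.map_le_iff_le_comap]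
      intro z hz
      show θ₀ z ∈ J₂
      rw [← hπ₂ker, hπθ]
      have hz0 : π₁ z = 0 := (hπ₁ker z).mpr hz
      rw [hz0]
      exact φ.toLieHom.map_zero
    have hJle' : (LieIdeal.map θ₀ J₁).toSubmodule ≤ J₂.toSubmodule := hJle
    have hJeq : LieIdeal.map θ₀ J₁ = J₂ := by
      rw [← LieSubmodule.toSubmodule_inj]
      refine Submodule.eq_of_le_of_finrank_le hJle' ?_
      rw [hmapfr J₁]
      exact le_of_eq hfr12.symm
    -- map θ₀ (lieMultiplicator F d I) = (lieMultiplicator F d I)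
    have hMle : LieIdeal.map θ₀ (lieMultiplicator F d I) ≤ (lieMultiplicator F d I) := by
      rw [LieIdeal.map_le_iff_le_comap]
      intro z hz
      show θ₀ z ∈ (lieMultiplicator F d I)
      apply hpull
      rw [hπθ]
      have h2 : π₁ z ∈ LieIdeal.map π₁ (lieMultiplicator F d I) := LieIdeal.mem_map hz
      rw [hMQ₁] at h2
      have h3 := LieIdeal.mem_map (f := φ.toLieHom) h2
      rw [hφN, ← hMQ₂] at h3
      exact h3
    have hMle' : (LieIdeal.map θ₀ (lieMultiplicator F d I)).toSubmodule ≤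
        (lieMultiplicator F d I).toSubmodule := hMle
    have hMeq : LieIdeal.map θ₀ (lieMultiplicator F d I) = (lieMultiplicator F d I) := by
      rw [← LieSubmodule.toSubmodule_inj]
      refine Submodule.eq_of_le_of_finrank_le hMle' ?_
      exact le_of_eq (hmapfr (lieMultiplicator F d I)).symm
    exact ⟨θ, by rw [hθhom, hMeq], by rw [hθhom, hJeq]⟩
  · -- easy direction
    rintro ⟨θ, hθM, hθJ⟩
    have hθsurj : Function.Surjective θ.toLieHom := θ.surjective
    have h12 : ∀ x ∈ J₁, θ.toLieHom x ∈ J₂ := by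
      intro x hx
      rw [← hθJ]
      exact LieIdeal.mem_map hx
    have h21 : ∀ z ∈ J₂, θ.symm z ∈ J₁ := by
      intro z hz
      rw [← hθJ] at hz
      obtain ⟨⟨x, hx⟩, hxz⟩ := LieIdeal.mem_map_of_surjective hθsurj hz
      have hxz' : θ x = z := hxz
      have : θ.symm z = x := by rw [← hxz', θ.symm_apply_apply]
      rw [this]
      exact hx
    set f₁ : (LieCover F d I ⧸ J₁) →ₗ⁅F⁆ (LieCover F d I ⧸ J₂) :=
      lieQuotientLift J₁ ((LieIdeal.quotientMk J₂).comp θ.toLieHom) (by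
        intro x hx
        simp only [LinearMap.mem_ker]
        show LieIdeal.quotientMk J₂ (θ.toLieHom x) = 0
        have : Submodule.Quotient.mk (p := J₂.toSubmodule) (θ.toLieHom x) = 0 := by
          rw [Submodule.Quotient.mk_eq_zero]
          exact h12 x hx
        exact this) with hf₁
    set f₂ : (LieCover F d I ⧸ J₂) →ₗ⁅F⁆ (LieCover F d I ⧸ J₁) :=
      lieQuotientLift J₂ ((LieIdeal.quotientMk J₁).comp θ.symm.toLieHom) (by
        intro z hz
        simp only [LinearMap.mem_ker]
        show LieIdeal.quotientMk J₁ (θ.symm.toLieHom z) = 0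
        have : Submodule.Quotient.mk (p := J₁.toSubmodule) (θ.symm.toLieHom z) = 0 := by
          rw [Submodule.Quotient.mk_eq_zero]
          exact h21 z hz
        exact this) with hf₂
    refine ⟨{ f₁ with
      invFun := f₂
      left_inv := ?_
      right_inv := ?_ }⟩
    · intro q
      obtain ⟨x, rfl⟩ := Submodule.Quotient.mk_surjective J₁.toSubmodule q
      show f₂ (f₁ (LieIdeal.quotientMk J₁ x)) = LieIdeal.quotientMk J₁ x
      have e1 : f₁ (LieIdeal.quotientMk J₁ x) = LieIdeal.quotientMk J₂ (θ.toLieHom x) := rfl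
      have e2 : f₂ (LieIdeal.quotientMk J₂ (θ.toLieHom x)) =
          LieIdeal.quotientMk J₁ (θ.symm.toLieHom (θ.toLieHom x)) := rfl
      rw [e1, e2]
      congr 1
      exact θ.symm_apply_apply x
    · intro q
      obtain ⟨z, rfl⟩ := Submodule.Quotient.mk_surjective J₂.toSubmodule q
      show f₁ (f₂ (LieIdeal.quotientMk J₂ z)) = LieIdeal.quotientMk J₂ z
      have e1 : f₂ (LieIdeal.quotientMk J₂ z) = LieIdeal.quotientMk J₁ (θ.symm.toLieHom z) := rfl
      have e2 : f₁ (LieIdeal.quotientMk J₁ (θ.symm.toLieHom z)) =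
          LieIdeal.quotientMk J₂ (θ.toLieHom (θ.symm.toLieHom z)) := rfl
      rw [e1, e2]
      congr 1
      exact θ.apply_symm_apply z
end
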